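/- arXiv:0911.2778 — 11 statements merged into one kernel-verified Lean document; each statement's English description precedes it below -/
import Mathlib

section
/- Let f : [0,1] → ℝ≥0 be bounded by B ≥ 1 and suppose for every n there exist ξ_n, η_n ∈ [0,1] with ξ_n + η_n ∈ [0,1] and f(ξ_n + η_n) > 2^n (f(ξ_n) + f(η_n)). Then the relation E_f on [0,1]^ℕ is not transitive. -/
/-!
Take `x = 0`, `y = ξ n` and `z = ξ n + η n`, each repeated `k n = ⌈1 / (2 f (ξ n + η n))⌉` times.
The `n`-th block then contributes `k n f (ξ n + η n) ≥ 1/2` to `∑ f |z - x|`, which therefore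
diverges, whereas it contributes only `k n (f (ξ n) + f (η n)) ≤ (B + 1/2) / 2 ^ n` to
`∑ f |y - x| + ∑ f |z - y|`.
-/

open Set

theorem exists_nat_mul_mem_Ico {a : ℝ} (ha : 0 < a) :
    ∃ k : ℕ, (k : ℝ) * a ∈ Ico (1 / 2) (a + 1 / 2) := by
  refine ⟨⌈1 / (2 * a)⌉₊, ?_, ?_⟩
  · calc 1 / 2 = 1 / (2 * a) * a := by field_simp
      _ ≤ _ := mul_le_mul_of_nonneg_right (Nat.le_ceil _) ha.le
  · calc (⌈1 / (2 * a)⌉₊ : ℝ) * a < (1 / (2 * a) + 1) * a :=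
          mul_lt_mul_of_pos_right (Nat.ceil_lt_add_one (by positivity)) ha
      _ = a + 1 / 2 := by field_simp; ring

theorem nonempty_equiv_sigma_fin {k : ℕ → ℕ} (hk : ∀ n, k n ≠ 0) :
    Nonempty (ℕ ≃ Σ n, Fin (k n)) := by
  have : Infinite (Σ n, Fin (k n)) :=
    Infinite.of_injective (fun n => ⟨n, ⟨0, Nat.pos_of_ne_zero (hk n)⟩⟩)
      fun _ _ h => congrArg Sigma.fst h
  obtain ⟨_⟩ := nonempty_denumerable (Σ n, Fin (k n))
  exact ⟨(Denumerable.eqv _).symm⟩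

theorem summable_comp_sigma_fst_iff {α β : Type*} {k : β → ℕ} (e : α ≃ Σ b, Fin (k b))
    {g : β → ℝ} (hg : ∀ b, 0 ≤ g b) :
    Summable (fun a => g (e a).1) ↔ Summable fun b => (k b : ℝ) * g b := by
  refine (e.summable_iff (f := fun p => g p.1)).trans ?_
  rw [summable_sigma_of_nonneg fun p => hg p.1]
  simp [Summable.of_finite]

theorem summable_nat_mul_of_two_pow_mul_le {k : ℕ → ℕ} {s a : ℕ → ℝ} {C : ℝ}
    (hs : ∀ n, 0 ≤ s n) (hsa : ∀ n, 2 ^ n * s n ≤ a n) (hka : ∀ n, k n * a n ≤ C) :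
    Summable fun n => (k n : ℝ) * s n := by
  refine (summable_geometric_two.mul_left C).of_nonneg_of_le
    (fun n => mul_nonneg (Nat.cast_nonneg _) (hs n)) fun n => ?_
  rw [one_div_pow, mul_one_div, le_div_iff₀ (by positivity)]
  calc (k n : ℝ) * s n * 2 ^ n = k n * (2 ^ n * s n) := by ring
    _ ≤ k n * a n := mul_le_mul_of_nonneg_left (hsa n) (Nat.cast_nonneg _)
    _ ≤ C := hka n

theorem stmt1_general (f : ℝ → ℝ) (B : ℝ)
    (hnn : ∀ x ∈ Icc (0:ℝ) 1, 0 ≤ f x)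
    (hbd : ∀ x ∈ Icc (0:ℝ) 1, f x ≤ B)
    (hwit : ∀ n : ℕ, ∃ ξ ∈ Icc (0:ℝ) 1, ∃ η ∈ Icc (0:ℝ) 1, ξ + η ∈ Icc (0:ℝ) 1 ∧
      2 ^ n * (f ξ + f η) < f (ξ + η)) :
    ¬ (∀ x y z : ℕ → ℝ, (∀ n, x n ∈ Icc (0:ℝ) 1) → (∀ n, y n ∈ Icc (0:ℝ) 1) →
      (∀ n, z n ∈ Icc (0:ℝ) 1) →
      (Summable fun n => f |y n - x n|) → (Summable fun n => f |z n - y n|) →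
      Summable fun n => f |z n - x n|) := by
  intro H
  choose ξ hξ η hη hξη hgt using hwit
  have hξ0 : ∀ n, 0 ≤ ξ n := fun n => (hξ n).1
  have hη0 : ∀ n, 0 ≤ η n := fun n => (hη n).1
  have hfξ : ∀ n, 0 ≤ f (ξ n) := fun n => hnn _ (hξ n)
  have hfη : ∀ n, 0 ≤ f (η n) := fun n => hnn _ (hη n)
  have hf_pos : ∀ n, 0 < f (ξ n + η n) := fun n =>
    (mul_nonneg (by positivity) (add_nonneg (hfξ n) (hfη n))).trans_lt (hgt n)
  choose k hk using fun n => exists_nat_mul_mem_Ico (hf_pos n)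
  obtain ⟨e⟩ := nonempty_equiv_sigma_fin (k := k) fun n h =>
    absurd (hk n).1 (by norm_num [h])
  have hsmall : Summable fun j => f (ξ (e j).1) + f (η (e j).1) :=
    (summable_comp_sigma_fst_iff e fun n => add_nonneg (hfξ n) (hfη n)).2 <|
      summable_nat_mul_of_two_pow_mul_le (C := B + 1 / 2) (fun n => add_nonneg (hfξ n) (hfη n))
        (fun n => (hgt n).le) fun n => by linarith [(hk n).2, hbd _ (hξη n)]
  have hlarge : ¬ Summable fun j => f (ξ (e j).1 + η (e j).1) := by
    rw [summable_comp_sigma_fst_iff e fun n => (hf_pos n).le]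
    intro hs
    obtain ⟨n, hn⟩ := (hs.tendsto_atTop_zero.eventually (gt_mem_nhds one_half_pos)).exists
    exact (hk n).1.not_gt hn
  refine hlarge ?_
  simpa [abs_of_nonneg, hξ0, hη0, add_nonneg] using
    H (fun _ => 0) (fun j => ξ (e j).1) (fun j => ξ (e j).1 + η (e j).1)
      (fun _ => ⟨le_rfl, zero_le_one⟩) (fun j => hξ _) (fun j => hξη _)
      (by simpa [abs_of_nonneg, hξ0] using
        hsmall.of_nonneg_of_le (fun j => hfξ _) fun j => le_add_of_nonneg_right (hfη _))
      (by simpa [abs_of_nonneg, hη0] using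
        hsmall.of_nonneg_of_le (fun j => hfη _) fun j => le_add_of_nonneg_left (hfξ _))

/-- If `f` badly fails subadditivity, then `E_f` is not transitive. -/
theorem stmt1 (f : ℝ → ℝ) (B : ℝ) (hB : 1 ≤ B)
    (hnn : ∀ x ∈ Icc (0:ℝ) 1, 0 ≤ f x)
    (hbd : ∀ x ∈ Icc (0:ℝ) 1, f x ≤ B)
    (hwit : ∀ n : ℕ, ∃ ξ ∈ Icc (0:ℝ) 1, ∃ η ∈ Icc (0:ℝ) 1, ξ + η ∈ Icc (0:ℝ) 1 ∧
      2 ^ n * (f ξ + f η) < f (ξ + η)) :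
    ¬ (∀ x y z : ℕ → ℝ, (∀ n, x n ∈ Icc (0:ℝ) 1) → (∀ n, y n ∈ Icc (0:ℝ) 1) →
      (∀ n, z n ∈ Icc (0:ℝ) 1) →
      (Summable fun n => f |y n - x n|) → (Summable fun n => f |z n - y n|) →
      Summable fun n => f |z n - x n|) :=
  stmt1_general f B hnn hbd hwit
end

section
/- Define ρ_k : ℝ → [0,1] by ρ_k(x) = 1 if k < ⌊x⌋, ρ_k(x) = x − ⌊x⌋ if k = ⌊x⌋, and ρ_k(x) = 0 if k > ⌊x⌋. Then for all real x, y: |y − x| = Σ_{k∈ℤ} |ρ_k(y) − ρ_k(x)|, and moreover for p ≥ 1, Σ_{k∈ℤ} |ρ_k(y) − ρ_k(x)|^p ≤ |y−x|^p, and if |y−x| ≤ 1 then |y−x|^p ≤ 2^p Σ_{k∈ℤ} |ρ_k(y) − ρ_k(x)|^p. -/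
/-!
`ρ_k x = max 0 (min 1 (x - k))` is the length of `(-∞, x] ∩ [k, k + 1]`. Hence for `x ≤ y` the
differences `ρ_k y - ρ_k x` are nonnegative, vanish unless `⌊x⌋ ≤ k ≤ ⌊y⌋`, and add up to `y - x`.
The `ℓ^p` bound is then the superadditivity of `t ↦ t ^ p`; when `y - x ≤ 1` at most two terms are
nonzero, and the reverse bound is the power mean inequality for two numbers.
-/

open Finset

theorem sum_rpow_le_rpow_sum {ι : Type*} (s : Finset ι) {f : ι → ℝ} (hf : ∀ i ∈ s, 0 ≤ f i)
    {p : ℝ} (hp : 1 ≤ p) : ∑ i ∈ s, f i ^ p ≤ (∑ i ∈ s, f i) ^ p := by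
  classical
  induction s using Finset.induction_on with
  | empty => simp [Real.zero_rpow (by linarith : p ≠ 0)]
  | insert i s hi ih =>
    rw [sum_insert hi, sum_insert hi]
    have hfi := hf i (mem_insert_self i s)
    have hfs : ∀ j ∈ s, 0 ≤ f j := fun j hj => hf j (mem_insert_of_mem hj)
    calc f i ^ p + ∑ j ∈ s, f j ^ p ≤ f i ^ p + (∑ j ∈ s, f j) ^ p := by gcongr; exact ih hfs
      _ ≤ (f i + ∑ j ∈ s, f j) ^ p := Real.add_rpow_le_rpow_add hfi (sum_nonneg hfs) hp

noncomputable def rho (k : ℤ) (x : ℝ) : ℝ :=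
  if k < ⌊x⌋ then 1 else if k = ⌊x⌋ then x - (⌊x⌋ : ℝ) else 0

section rho

variable {k : ℤ} {x y : ℝ}

lemma rho_of_lt_floor (h : k < ⌊x⌋) : rho k x = 1 := if_pos h

lemma rho_floor : rho ⌊x⌋ x = Int.fract x := by simp [rho]

lemma rho_of_floor_lt (h : ⌊x⌋ < k) : rho k x = 0 := by
  simp [rho, h.ne', h.not_gt]

lemma rho_eq_max_min (k : ℤ) (x : ℝ) : rho k x = max 0 (min 1 (x - k)) := by
  rcases lt_trichotomy k ⌊x⌋ with h | rfl | h
  · have : (k : ℝ) + 1 ≤ x := by exact_mod_cast Int.le_floor.1 (Int.add_one_le_of_lt h)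
    rw [rho_of_lt_floor h, min_eq_left (by linarith), max_eq_right zero_le_one]
  · rw [rho_floor, ← Int.fract, min_eq_right (Int.fract_lt_one x).le,
      max_eq_right (Int.fract_nonneg x)]
  · have : x < k := Int.floor_lt.1 h
    rw [rho_of_floor_lt h, max_eq_left (min_le_of_right_le (by linarith))]

lemma rho_mono (k : ℤ) : Monotone (rho k) := fun a b hab => by
  simp only [rho_eq_max_min]
  gcongr

lemma sum_rho_Icc {a b : ℤ} (ha : a ≤ ⌊x⌋) (hb : ⌊x⌋ ≤ b) :
    ∑ k ∈ Icc a b, rho k x = x - a := by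
  have hsplit : Icc a b = insert ⌊x⌋ (Ico a ⌊x⌋ ∪ Ioc ⌊x⌋ b) := by
    ext k; simp only [mem_Icc, mem_insert, mem_union, mem_Ico, mem_Ioc]; omega
  have hdisj : Disjoint (Ico a ⌊x⌋) (Ioc ⌊x⌋ b) :=
    disjoint_left.2 fun k hk hk' => by simp only [mem_Ico, mem_Ioc] at hk hk'; omega
  rw [hsplit, sum_insert (by simp), sum_union hdisj,
    sum_congr rfl fun k hk => rho_of_lt_floor (mem_Ico.1 hk).2,
    sum_congr rfl fun k hk => rho_of_floor_lt (mem_Ioc.1 hk).1, sum_const_zero, sum_const,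
    nsmul_one, rho_floor]
  have hcard : (#(Ico a ⌊x⌋) : ℝ) = ⌊x⌋ - a := by exact_mod_cast Int.card_Ico_of_le _ _ ha
  rw [hcard, Int.fract]
  ring

lemma rho_sub_eq_zero (h : x ≤ y) (hk : k ∉ Icc ⌊x⌋ ⌊y⌋) : rho k y - rho k x = 0 := by
  have hxy := Int.floor_mono h
  rw [mem_Icc, not_and_or, not_le, not_le] at hk
  rcases hk with hk | hk
  · rw [rho_of_lt_floor hk, rho_of_lt_floor (hk.trans_le hxy), sub_self]
  · rw [rho_of_floor_lt hk, rho_of_floor_lt (hxy.trans_lt hk), sub_self]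

lemma sum_rho_sub (h : x ≤ y) : ∑ k ∈ Icc ⌊x⌋ ⌊y⌋, (rho k y - rho k x) = y - x := by
  have hxy := Int.floor_mono h
  rw [sum_sub_distrib, sum_rho_Icc hxy le_rfl, sum_rho_Icc le_rfl hxy]
  ring

lemma abs_rho_sub_eq_zero (h : x ≤ y) (hk : k ∉ Icc ⌊x⌋ ⌊y⌋) : |rho k y - rho k x| = 0 := by
  rw [rho_sub_eq_zero h hk, abs_zero]

lemma sum_abs_rho_sub (h : x ≤ y) : ∑ k ∈ Icc ⌊x⌋ ⌊y⌋, |rho k y - rho k x| = |y - x| := by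
  rw [abs_of_nonneg (sub_nonneg.2 h), ← sum_rho_sub h]
  exact sum_congr rfl fun k _ => abs_of_nonneg (sub_nonneg.2 (rho_mono k h))

lemma hasSum_abs_rho_sub (h : x ≤ y) : HasSum (fun k => |rho k y - rho k x|) |y - x| := by
  rw [← sum_abs_rho_sub h]
  exact hasSum_sum_of_ne_finset_zero fun k hk => abs_rho_sub_eq_zero h hk

variable {p : ℝ}

lemma tsum_abs_rho_sub_rpow_eq_sum (hp : p ≠ 0) (h : x ≤ y) :
    ∑' k, |rho k y - rho k x| ^ p = ∑ k ∈ Icc ⌊x⌋ ⌊y⌋, |rho k y - rho k x| ^ p :=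
  tsum_eq_sum fun k hk => by rw [abs_rho_sub_eq_zero h hk, Real.zero_rpow hp]

lemma tsum_abs_rho_sub_rpow_le (hp : 1 ≤ p) (h : x ≤ y) :
    ∑' k, |rho k y - rho k x| ^ p ≤ |y - x| ^ p := by
  rw [tsum_abs_rho_sub_rpow_eq_sum (by linarith) h, ← sum_abs_rho_sub h]
  exact sum_rpow_le_rpow_sum _ (fun _ _ => abs_nonneg _) hp

lemma rpow_le_two_rpow_mul_tsum_abs_rho_sub (hp : 1 ≤ p) (h : x ≤ y) (h1 : |y - x| ≤ 1) :
    |y - x| ^ p ≤ 2 ^ p * ∑' k, |rho k y - rho k x| ^ p := by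
  have hfloor : ⌊y⌋ ≤ ⌊x⌋ + 1 := by
    rw [← Int.floor_add_one]
    exact Int.floor_mono (by linarith [le_abs_self (y - x)])
  have hcard : (#(Icc ⌊x⌋ ⌊y⌋) : ℝ) ≤ 2 := by
    rw [Int.card_Icc]; norm_cast; omega
  rw [tsum_abs_rho_sub_rpow_eq_sum (by linarith) h, ← sum_abs_rho_sub h]
  calc (∑ k ∈ Icc ⌊x⌋ ⌊y⌋, |rho k y - rho k x|) ^ p
      ≤ (#(Icc ⌊x⌋ ⌊y⌋) : ℝ) ^ (p - 1) * ∑ k ∈ Icc ⌊x⌋ ⌊y⌋, |rho k y - rho k x| ^ p :=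
        Real.rpow_sum_le_const_mul_sum_rpow_of_nonneg _ hp fun _ _ => abs_nonneg _
    _ ≤ 2 ^ p * ∑ k ∈ Icc ⌊x⌋ ⌊y⌋, |rho k y - rho k x| ^ p := by
        gcongr
        calc (#(Icc ⌊x⌋ ⌊y⌋) : ℝ) ^ (p - 1) ≤ 2 ^ (p - 1) := by gcongr
          _ ≤ 2 ^ p := Real.rpow_le_rpow_of_exponent_le one_le_two (by linarith)

end rho

/-- Properties of the splitting maps `ρ_k` used in Lemma (mege). -/
theorem stmt2 (p : ℝ) (hp : 1 ≤ p) :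
    let ρ : ℤ → ℝ → ℝ := fun k x =>
      if k < ⌊x⌋ then 1 else if k = ⌊x⌋ then x - (⌊x⌋ : ℝ) else 0
    ∀ x y : ℝ,
      HasSum (fun k : ℤ => |ρ k y - ρ k x|) |y - x| ∧
      (∑' k : ℤ, |ρ k y - ρ k x| ^ p) ≤ |y - x| ^ p ∧
      (|y - x| ≤ 1 → |y - x| ^ p ≤ 2 ^ p * ∑' k : ℤ, |ρ k y - ρ k x| ^ p) := by
  intro ρ x y
  rw [show ρ = rho from rfl]
  wlog h : x ≤ y generalizing x y
  · simpa only [abs_sub_comm] using this y x (le_of_not_ge h)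
  exact ⟨hasSum_abs_rho_sub h, tsum_abs_rho_sub_rpow_le hp h,
    rpow_le_two_rpow_mul_tsum_abs_rho_sub hp h⟩
end

section
/- For every p with 1 ≤ p < ∞, the equivalence relation ℓ^p on ℝ^ℕ (given by (x_n) ~ (y_n) ⟺ Σ_n |y_n − x_n|^p < ∞) is Borel reducible to its restriction to [0,1]^ℕ × [0,1]^ℕ. -/
/-!
Cut the real line into the unit strips `[k, k + 1]`, `k ∈ ℤ`, and record the position of a real `t`
clamped to each strip, rescaled to `[0, 1]`. For `s ≤ t` the differences of these coordinates are
nonnegative and add up to `t - s`, and one of them is at least `min (t - s) 1 / 2`; so their `ℓ^p`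
norm lies between `min |t - s| 1 / 2` and `|t - s|`. Doing this in every coordinate of `ℝ^ℕ` and
enumerating `ℕ × ℤ` by `ℕ` gives the reduction, because summability of `|y n - x n| ^ p` forces
`|y n - x n| < 1` for all but finitely many `n`.
-/

open Set

noncomputable def clampAt (k : ℤ) (t : ℝ) : ℝ := min (max (t - k) 0) 1

lemma clampAt_mem_Icc (k : ℤ) (t : ℝ) : clampAt k t ∈ Icc (0 : ℝ) 1 :=
  ⟨le_min (le_max_right _ _) zero_le_one, min_le_right _ _⟩

lemma continuous_clampAt (k : ℤ) : Continuous (clampAt k) := by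
  unfold clampAt; fun_prop

lemma monotone_clampAt (k : ℤ) : Monotone (clampAt k) := fun _ _ h =>
  min_le_min_right _ (max_le_max_right _ (sub_le_sub_right h _))

lemma clampAt_of_le {k : ℤ} {t : ℝ} (h : t ≤ k) : clampAt k t = 0 := by
  rw [clampAt, max_eq_right (by linarith), min_eq_left zero_le_one]

lemma clampAt_of_add_one_le {k : ℤ} {t : ℝ} (h : k + 1 ≤ t) : clampAt k t = 1 := by
  rw [clampAt, max_eq_left (by linarith), min_eq_right (by linarith)]

lemma clampAt_eq_sub (k : ℤ) (t : ℝ) :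
    clampAt k t = max (t - k) 0 - max (t - (k + 1 : ℤ)) 0 := by
  simp only [clampAt, min_def, max_def]
  push_cast
  split_ifs <;> linarith

lemma Int.sum_Ico_sub_add_one {M : Type*} [AddCommGroup M] (g : ℤ → M) {a b : ℤ} (hab : a ≤ b) :
    ∑ k ∈ Finset.Ico a b, (g k - g (k + 1)) = g a - g b := by
  induction b, hab using Int.leInduction with
  | base => simp
  | succ b hab ih =>
    rw [Finset.Ico_add_one_right_eq_Icc, ← Finset.Ico_insert_right hab,
      Finset.sum_insert Finset.right_notMem_Ico, ih]
    abel

lemma clampAt_sub_eq_zero_of_notMem {s t : ℝ} (hst : s ≤ t) {k : ℤ}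
    (hk : k ∉ Finset.Ico ⌊s⌋ ⌈t⌉) : clampAt k t - clampAt k s = 0 := by
  rw [Finset.mem_Ico, not_and_or, not_le, not_lt] at hk
  rcases hk with hk | hk
  · have hks : (k : ℝ) + 1 ≤ s :=
      le_trans (by exact_mod_cast hk) (Int.floor_le s)
    rw [clampAt_of_add_one_le hks, clampAt_of_add_one_le (hks.trans hst), sub_self]
  · have hkt : t ≤ k := (Int.le_ceil t).trans (by exact_mod_cast hk)
    rw [clampAt_of_le hkt, clampAt_of_le (hst.trans hkt), sub_self]

-- `clampAt k t = g_t k - g_t (k + 1)` with `g_t k = max (t - k) 0`, so the sum telescopes.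
lemma hasSum_clampAt_sub {s t : ℝ} (hst : s ≤ t) :
    HasSum (fun k : ℤ => clampAt k t - clampAt k s) (t - s) := by
  set g : ℤ → ℝ := fun k => max (t - k) 0 - max (s - k) 0
  have hg : ∀ k : ℤ, clampAt k t - clampAt k s = g k - g (k + 1) := fun k => by
    simp only [g, clampAt_eq_sub]; ring
  have hfloor : (⌊s⌋ : ℝ) ≤ s := Int.floor_le s
  have hceil : t ≤ (⌈t⌉ : ℝ) := Int.le_ceil t
  have hg_floor : g ⌊s⌋ = t - s := by
    simp only [g]; rw [max_eq_left (by linarith), max_eq_left (by linarith)]; ring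
  have hg_ceil : g ⌈t⌉ = 0 := by
    simp only [g]; rw [max_eq_right (by linarith), max_eq_right (by linarith), sub_self]
  have hsum : ∑ k ∈ Finset.Ico ⌊s⌋ ⌈t⌉, (clampAt k t - clampAt k s) = t - s := by
    rw [Finset.sum_congr rfl fun k _ => hg k,
      Int.sum_Ico_sub_add_one g ((Int.floor_le_floor hst).trans (Int.floor_le_ceil t)),
      hg_floor, hg_ceil, sub_zero]
  exact hsum ▸ hasSum_sum_of_ne_finset_zero fun k hk => clampAt_sub_eq_zero_of_notMem hst hk

lemma rpow_le_rpow_sub_one_mul {a d p : ℝ} (ha : 0 ≤ a) (had : a ≤ d) (hp : 1 ≤ p) :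
    a ^ p ≤ d ^ (p - 1) * a := by
  calc a ^ p = a ^ (p - 1) * a := by
        rw [← Real.rpow_add_one' ha (by linarith), sub_add_cancel]
    _ ≤ d ^ (p - 1) * a := by gcongr

section HasSum

variable {ι : Type*} {u : ι → ℝ} {d p : ℝ}

lemma HasSum.summable_rpow (hp : 1 ≤ p) (hu : ∀ i, 0 ≤ u i) (h : HasSum u d) :
    Summable fun i => u i ^ p :=
  (h.summable.mul_left (d ^ (p - 1))).of_nonneg_of_le (fun i => Real.rpow_nonneg (hu i) p)
    fun i => rpow_le_rpow_sub_one_mul (hu i) (le_hasSum h i fun j _ => hu j) hp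

lemma HasSum.tsum_rpow_le (hp : 1 ≤ p) (hu : ∀ i, 0 ≤ u i) (h : HasSum u d) :
    ∑' i, u i ^ p ≤ d ^ p := by
  have hd : 0 ≤ d := h.nonneg hu
  calc ∑' i, u i ^ p ≤ ∑' i, d ^ (p - 1) * u i :=
        (h.summable_rpow hp hu).tsum_le_tsum
          (fun i => rpow_le_rpow_sub_one_mul (hu i) (le_hasSum h i fun j _ => hu j) hp)
          (h.summable.mul_left _)
    _ = d ^ p := by
        rw [tsum_mul_left, h.tsum_eq, ← Real.rpow_add_one' hd (by linarith), sub_add_cancel]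

end HasSum

lemma abs_clampAt_sub {s t : ℝ} (hst : s ≤ t) (k : ℤ) :
    |clampAt k t - clampAt k s| = clampAt k t - clampAt k s :=
  abs_of_nonneg (sub_nonneg.2 (monotone_clampAt k hst))

lemma exists_min_le_two_mul_clampAt_sub {s t : ℝ} (hst : s ≤ t) :
    ∃ k : ℤ, min (t - s) 1 ≤ 2 * (clampAt k t - clampAt k s) := by
  have h₁ : (⌊s⌋ : ℝ) ≤ s := Int.floor_le s
  have h₂ : s < ⌊s⌋ + 1 := Int.lt_floor_add_one s
  have hpair : min (t - s) 1 ≤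
      (clampAt ⌊s⌋ t - clampAt ⌊s⌋ s) + (clampAt (⌊s⌋ + 1) t - clampAt (⌊s⌋ + 1) s) := by
    simp only [clampAt, min_def, max_def]
    push_cast
    split_ifs <;> linarith
  rcases le_total (clampAt ⌊s⌋ t - clampAt ⌊s⌋ s)
    (clampAt (⌊s⌋ + 1) t - clampAt (⌊s⌋ + 1) s) with h | h
  · exact ⟨⌊s⌋ + 1, by linarith⟩
  · exact ⟨⌊s⌋, by linarith⟩

section Coordinate

variable {p : ℝ} (hp : 1 ≤ p) (s t : ℝ)
include hp

lemma summable_abs_clampAt_sub_rpow :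
    Summable fun k : ℤ => |clampAt k t - clampAt k s| ^ p := by
  wlog hst : s ≤ t generalizing s t
  · simpa only [abs_sub_comm] using this t s (le_of_not_ge hst)
  simp only [abs_clampAt_sub hst]
  exact (hasSum_clampAt_sub hst).summable_rpow hp fun k => sub_nonneg.2 (monotone_clampAt k hst)

lemma tsum_abs_clampAt_sub_rpow_le :
    ∑' k : ℤ, |clampAt k t - clampAt k s| ^ p ≤ |t - s| ^ p := by
  wlog hst : s ≤ t generalizing s t
  · simpa only [abs_sub_comm] using this t s (le_of_not_ge hst)
  simp only [abs_clampAt_sub hst, abs_of_nonneg (sub_nonneg.2 hst)]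
  exact (hasSum_clampAt_sub hst).tsum_rpow_le hp fun k => sub_nonneg.2 (monotone_clampAt k hst)

lemma min_abs_rpow_le_tsum_abs_clampAt_sub_rpow :
    min |t - s| 1 ^ p ≤ 2 ^ p * ∑' k : ℤ, |clampAt k t - clampAt k s| ^ p := by
  wlog hst : s ≤ t generalizing s t
  · simpa only [abs_sub_comm] using this t s (le_of_not_ge hst)
  obtain ⟨k, hk⟩ := exists_min_le_two_mul_clampAt_sub hst
  calc min |t - s| 1 ^ p ≤ (2 * |clampAt k t - clampAt k s|) ^ p := by
        rw [abs_of_nonneg (sub_nonneg.2 hst), abs_clampAt_sub hst]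
        gcongr
    _ = 2 ^ p * |clampAt k t - clampAt k s| ^ p := by
        rw [Real.mul_rpow zero_le_two (abs_nonneg _)]
    _ ≤ 2 ^ p * ∑' k : ℤ, |clampAt k t - clampAt k s| ^ p := by
        gcongr
        exact (summable_abs_clampAt_sub_rpow hp s t).le_tsum k fun j _ => by positivity

end Coordinate

lemma summable_rpow_of_summable_min_one_rpow {ι : Type*} {f : ι → ℝ} {p : ℝ}
    (h : Summable fun i => min (f i) 1 ^ p) : Summable fun i => f i ^ p := by
  refine h.congr_cofinite ((h.tendsto_cofinite_zero.eventually (gt_mem_nhds one_pos)).mono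
    fun i hi => ?_)
  show min (f i) 1 ^ p = f i ^ p
  rcases lt_or_ge (f i) 1 with hf | hf
  · rw [min_eq_left hf.le]
  · rw [min_eq_right hf, Real.one_rpow] at hi
    exact absurd hi (lt_irrefl 1)

theorem summable_abs_sub_rpow_iff_clampAt {ι : Type*} {p : ℝ} (hp : 1 ≤ p) (x y : ι → ℝ) :
    (Summable fun i => |y i - x i| ^ p) ↔
      Summable fun q : ι × ℤ => |clampAt q.2 (y q.1) - clampAt q.2 (x q.1)| ^ p := by
  rw [summable_prod_of_nonneg fun q => by positivity]
  simp only [summable_abs_clampAt_sub_rpow hp, implies_true, true_and]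
  have hnonneg (i : ι) : 0 ≤ ∑' k : ℤ, |clampAt k (y i) - clampAt k (x i)| ^ p :=
    tsum_nonneg fun k => by positivity
  constructor
  · exact fun h => h.of_nonneg_of_le hnonneg fun i => tsum_abs_clampAt_sub_rpow_le hp _ _
  · refine fun h => summable_rpow_of_summable_min_one_rpow ?_
    exact (h.mul_left (2 ^ p)).of_nonneg_of_le (fun i => by positivity)
      fun i => min_abs_rpow_le_tsum_abs_clampAt_sub_rpow hp _ _

/-- `ℓ^p` on `ℝ^ℕ` Borel reduces to its restriction to `[0,1]^ℕ`. -/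
theorem stmt3 (p : ℝ) (hp : 1 ≤ p) :
    ∃ ϑ : (ℕ → ℝ) → (ℕ → ℝ), Measurable ϑ ∧
      (∀ x n, ϑ x n ∈ Icc (0:ℝ) 1) ∧
      ∀ x y : ℕ → ℝ,
        ((Summable fun n => |y n - x n| ^ p) ↔ Summable fun n => |ϑ y n - ϑ x n| ^ p) := by
  let e : ℕ ≃ ℕ × ℤ := (Denumerable.eqv (ℕ × ℤ)).symm
  refine ⟨fun x m => clampAt (e m).2 (x (e m).1), ?_, fun x m => clampAt_mem_Icc _ _,
    fun x y => ?_⟩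
  · exact (continuous_pi fun m => (continuous_clampAt _).comp (continuous_apply _)).measurable
  · rw [summable_abs_sub_rpow_iff_clampAt hp, ← e.summable_iff]
    rfl
end

section
/- Let f : [0,1] → ℝ≥0 be bounded with f(0) = 0, continuous at 0, and suppose there is C ≥ 1 with f(x+y) ≤ C(f(x)+f(y)) and f(x) ≤ C(f(x+y)+f(y)) whenever x, y, x+y ∈ [0,1]. Define ε(a) = (1/2)·sup{ y ∈ [0,1] : f(d) ≤ a/(2C) for all 0 ≤ d ≤ y }. Then ε is increasing, ε(a) > 0 for a > 0, and for all x, y ∈ [0,1] with |y − x| ≤ ε(f(x)) one has f(x)/(2C) ≤ f(y) ≤ 2C·f(x). -/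
/-!
`ε(a)` is half the largest `r` such that `f ≤ a / (2C)` on `[0, r]`; continuity at `0` makes that
radius positive. If `|y - x| ≤ ε(f x)`, then `h = |y - x|` satisfies `C f(h) ≤ f(x) / 2`, and the
two quasi-triangle inequalities `f x ≤ C (f y + f h)`, `f y ≤ C (f x + f h)` give the comparison.
-/

open Set

def sublevelRadii (f : ℝ → ℝ) (c : ℝ) : Set ℝ :=
  {y | y ∈ Icc (0:ℝ) 1 ∧ ∀ d, 0 ≤ d → d ≤ y → f d ≤ c}

section SublevelRadii

variable {f : ℝ → ℝ} {c c' : ℝ}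

lemma zero_mem_sublevelRadii (hf0 : f 0 = 0) (hc : 0 ≤ c) : (0:ℝ) ∈ sublevelRadii f c :=
  ⟨left_mem_Icc.2 zero_le_one, fun d hd hd0 => by rwa [le_antisymm hd0 hd, hf0]⟩

lemma bddAbove_sublevelRadii : BddAbove (sublevelRadii f c) :=
  ⟨1, fun _ hy => hy.1.2⟩

lemma sublevelRadii_mono (hcc' : c ≤ c') : sublevelRadii f c ⊆ sublevelRadii f c' :=
  fun _ hy => ⟨hy.1, fun d hd hdy => (hy.2 d hd hdy).trans hcc'⟩

lemma csSup_sublevelRadii_mono (hf0 : f 0 = 0) (hc : 0 ≤ c) (hcc' : c ≤ c') :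
    sSup (sublevelRadii f c) ≤ sSup (sublevelRadii f c') :=
  csSup_le_csSup bddAbove_sublevelRadii ⟨0, zero_mem_sublevelRadii hf0 hc⟩
    (sublevelRadii_mono hcc')

lemma apply_le_of_le_half_csSup_sublevelRadii (hf0 : f 0 = 0) (hc : 0 ≤ c) {d : ℝ}
    (hd : 0 ≤ d) (hdr : d ≤ sSup (sublevelRadii f c) / 2) : f d ≤ c := by
  rcases hd.eq_or_lt with rfl | hd
  · rwa [hf0]
  · obtain ⟨z, hz, hdz⟩ :=
      exists_lt_of_lt_csSup ⟨0, zero_mem_sublevelRadii hf0 hc⟩ (by linarith : d < _)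
    exact hz.2 d hd.le hdz.le

lemma csSup_sublevelRadii_pos (hf0 : f 0 = 0) (hcont : ContinuousWithinAt f (Icc (0:ℝ) 1) 0)
    (hc : 0 < c) : 0 < sSup (sublevelRadii f c) := by
  obtain ⟨δ, hδ, hfδ⟩ := Metric.continuousWithinAt_iff.1 hcont c hc
  have hr : 0 < min (δ / 2) 1 := lt_min (half_pos hδ) one_pos
  have hmem : min (δ / 2) 1 ∈ sublevelRadii f c := by
    refine ⟨⟨hr.le, min_le_right _ _⟩, fun d hd hdr => ?_⟩
    have hdδ : dist d 0 < δ := by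
      rw [Real.dist_eq, sub_zero, abs_of_nonneg hd]
      linarith [min_le_left (δ / 2) 1]
    have := hfδ ⟨hd, hdr.trans (min_le_right _ _)⟩ hdδ
    rw [hf0, Real.dist_eq, sub_zero] at this
    exact (le_abs_self _).trans this.le
  exact hr.trans_le (le_csSup bddAbove_sublevelRadii hmem)

end SublevelRadii

lemma apply_le_mul_add_apply_abs_sub {f : ℝ → ℝ} {C : ℝ}
    (hR2a : ∀ x ∈ Icc (0:ℝ) 1, ∀ y ∈ Icc (0:ℝ) 1, x + y ∈ Icc (0:ℝ) 1 →
      f (x + y) ≤ C * (f x + f y))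
    (hR2b : ∀ x ∈ Icc (0:ℝ) 1, ∀ y ∈ Icc (0:ℝ) 1, x + y ∈ Icc (0:ℝ) 1 →
      f x ≤ C * (f (x + y) + f y))
    {x y : ℝ} (hx : x ∈ Icc (0:ℝ) 1) (hy : y ∈ Icc (0:ℝ) 1) :
    f x ≤ C * (f y + f |y - x|) := by
  rcases le_total x y with hxy | hyx
  · have hh : y - x ∈ Icc (0:ℝ) 1 := ⟨by linarith, by linarith [hx.1, hy.2]⟩
    have := hR2b x hx (y - x) hh (by rwa [add_sub_cancel])
    rw [add_sub_cancel] at this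
    rwa [abs_of_nonneg hh.1]
  · have hh : x - y ∈ Icc (0:ℝ) 1 := ⟨by linarith, by linarith [hy.1, hx.2]⟩
    have := hR2a y hy (x - y) hh (by rwa [add_sub_cancel])
    rw [add_sub_cancel] at this
    rwa [abs_sub_comm, abs_of_nonneg hh.1]

theorem stmt4_general (f : ℝ → ℝ)
    (hnn : ∀ x ∈ Icc (0:ℝ) 1, 0 ≤ f x)
    (hf0 : f 0 = 0)
    (hcont : ContinuousWithinAt f (Icc (0:ℝ) 1) 0)
    (C : ℝ) (hC : 1 ≤ C)
    (hR2a : ∀ x ∈ Icc (0:ℝ) 1, ∀ y ∈ Icc (0:ℝ) 1, x + y ∈ Icc (0:ℝ) 1 →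
      f (x + y) ≤ C * (f x + f y))
    (hR2b : ∀ x ∈ Icc (0:ℝ) 1, ∀ y ∈ Icc (0:ℝ) 1, x + y ∈ Icc (0:ℝ) 1 →
      f x ≤ C * (f (x + y) + f y)) :
    let ε : ℝ → ℝ := fun a =>
      (1 / 2) * sSup {y | y ∈ Icc (0:ℝ) 1 ∧ ∀ d, 0 ≤ d → d ≤ y → f d ≤ a / (2 * C)}
    (∀ a b : ℝ, 0 ≤ a → a ≤ b → ε a ≤ ε b) ∧
    (∀ a : ℝ, 0 < a → 0 < ε a) ∧
    ∀ x ∈ Icc (0:ℝ) 1, ∀ y ∈ Icc (0:ℝ) 1, |y - x| ≤ ε (f x) →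
      f x / (2 * C) ≤ f y ∧ f y ≤ 2 * C * f x := by
  have h2C : 0 < 2 * C := by linarith
  intro ε
  have hε : ∀ a, ε a = sSup (sublevelRadii f (a / (2 * C))) / 2 := fun a => by
    simp only [ε, sublevelRadii]; ring
  refine ⟨fun a b ha hab => ?_, fun a ha => ?_, fun x hx y hy hxy => ?_⟩
  · have := csSup_sublevelRadii_mono (f := f) hf0 (by positivity)
      (div_le_div_of_nonneg_right hab h2C.le)
    linarith [hε a, hε b]
  · have := csSup_sublevelRadii_pos hf0 hcont (div_pos ha h2C)
    linarith [hε a]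
  · have hfx := hnn x hx
    have hsmall : f |y - x| ≤ f x / (2 * C) :=
      apply_le_of_le_half_csSup_sublevelRadii hf0 (by positivity) (abs_nonneg _)
        (hε (f x) ▸ hxy)
    have hCsmall : C * f |y - x| ≤ f x / 2 := by
      calc C * f |y - x| ≤ C * (f x / (2 * C)) := by gcongr
        _ = f x / 2 := by field_simp
    have hfx_le := apply_le_mul_add_apply_abs_sub hR2a hR2b hx hy
    have hfy_le := apply_le_mul_add_apply_abs_sub hR2a hR2b hy hx
    rw [abs_sub_comm] at hfy_le
    constructor
    · rw [div_le_iff₀ h2C]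
      linarith
    · nlinarith

/-- The modulus `ε` from Proposition (f_e): monotonicity, positivity and comparability. -/
theorem stmt4 (f : ℝ → ℝ) (B : ℝ)
    (hbd : ∀ x ∈ Icc (0:ℝ) 1, f x ≤ B)
    (hnn : ∀ x ∈ Icc (0:ℝ) 1, 0 ≤ f x)
    (hf0 : f 0 = 0)
    (hcont : ContinuousWithinAt f (Icc (0:ℝ) 1) 0)
    (C : ℝ) (hC : 1 ≤ C)
    (hR2a : ∀ x ∈ Icc (0:ℝ) 1, ∀ y ∈ Icc (0:ℝ) 1, x + y ∈ Icc (0:ℝ) 1 →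
      f (x + y) ≤ C * (f x + f y))
    (hR2b : ∀ x ∈ Icc (0:ℝ) 1, ∀ y ∈ Icc (0:ℝ) 1, x + y ∈ Icc (0:ℝ) 1 →
      f x ≤ C * (f (x + y) + f y)) :
    let ε : ℝ → ℝ := fun a =>
      (1 / 2) * sSup {y | y ∈ Icc (0:ℝ) 1 ∧ ∀ d, 0 ≤ d → d ≤ y → f d ≤ a / (2 * C)}
    (∀ a b : ℝ, 0 ≤ a → a ≤ b → ε a ≤ ε b) ∧
    (∀ a : ℝ, 0 < a → 0 < ε a) ∧
    ∀ x ∈ Icc (0:ℝ) 1, ∀ y ∈ Icc (0:ℝ) 1, |y - x| ≤ ε (f x) →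
      f x / (2 * C) ≤ f y ∧ f y ≤ 2 * C * f x :=
  stmt4_general f hnn hf0 hcont C hC hR2a hR2b
end

section
/- Let f : [0,1] → ℝ≥0 be bounded, continuous at 0, with f(0)=0, satisfying (R2) with constant C. Then the set U = {x ∈ [0,1] : f(x) > 0} is open in [0,1], and f is continuous at every point of [0,1] \ U. -/
open Set Filter Topology

/-!
Both parts of (R2) combine into `f y ≤ C (f x + f |y - x|)` for all `x, y ∈ [0,1]`, so near any
point `f` is controlled by its values near `0`, where it tends to `f 0 = 0`. If `f x > 0`, then
`C f y ≥ f x - C f |y - x| > 0` for `y` close to `x`; if `f x = 0`, then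
`|f y| ≤ C |f (|y - x|)|`, which tends to `0` as `y → x`.
-/

def R2Condition (f : ℝ → ℝ) (C : ℝ) : Prop :=
  (∀ x ∈ Icc (0:ℝ) 1, ∀ y ∈ Icc (0:ℝ) 1, x + y ∈ Icc (0:ℝ) 1 → f (x + y) ≤ C * (f x + f y)) ∧
    ∀ x ∈ Icc (0:ℝ) 1, ∀ y ∈ Icc (0:ℝ) 1, x + y ∈ Icc (0:ℝ) 1 → f x ≤ C * (f (x + y) + f y)

namespace R2Condition

variable {f : ℝ → ℝ} {C : ℝ}

theorem le_mul_add_abs_sub (hf : R2Condition f C)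
    {x y : ℝ} (hx : x ∈ Icc (0:ℝ) 1) (hy : y ∈ Icc (0:ℝ) 1) :
    f y ≤ C * (f x + f |y - x|) := by
  rcases le_total x y with hxy | hyx
  · rw [abs_of_nonneg (sub_nonneg.2 hxy)]
    simpa using hf.1 x hx (y - x) ⟨by linarith, by linarith [hy.2, hx.1]⟩ (by simpa using hy)
  · rw [abs_of_nonpos (sub_nonpos.2 hyx), neg_sub]
    simpa using hf.2 y hy (x - y) ⟨by linarith, by linarith [hx.2, hy.1]⟩ (by simpa using hx)

theorem abs_le_mul_abs_of_eq_zero (hf : R2Condition f C) (hC : 1 ≤ C)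
    {x y : ℝ} (hx : x ∈ Icc (0:ℝ) 1) (hy : y ∈ Icc (0:ℝ) 1) (hfx : f x = 0) :
    |f y| ≤ C * |f (|y - x|)| := by
  have hupper : f y ≤ C * (f x + f |y - x|) := hf.le_mul_add_abs_sub hx hy
  have hlower : f x ≤ C * (f y + f |y - x|) := by
    simpa only [abs_sub_comm] using hf.le_mul_add_abs_sub hy hx
  rw [hfx, zero_add] at hupper
  rw [hfx] at hlower
  have hself : |f (|y - x|)| ≤ C * |f (|y - x|)| := le_mul_of_one_le_left (abs_nonneg _) hC
  have hsum : 0 ≤ f y + f |y - x| := nonneg_of_mul_nonneg_right hlower (zero_lt_one.trans_le hC)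
  have hmul : C * f |y - x| ≤ C * |f (|y - x|)| :=
    mul_le_mul_of_nonneg_left (le_abs_self _) (zero_le_one.trans hC)
  rw [abs_le]
  constructor <;> linarith [le_abs_self (f |y - x|)]

end R2Condition

theorem tendsto_comp_abs_sub_nhdsWithin_Icc {f : ℝ → ℝ}
    (hcont : ContinuousWithinAt f (Icc (0:ℝ) 1) 0) {x : ℝ} (hx : x ∈ Icc (0:ℝ) 1) :
    Tendsto (fun y => f |y - x|) (𝓝[Icc (0:ℝ) 1] x) (𝓝 (f 0)) := by
  have hdist : ContinuousWithinAt (fun y => |y - x|) (Icc (0:ℝ) 1) x :=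
    (continuous_sub_right x).abs.continuousWithinAt
  have hmaps : MapsTo (fun y => |y - x|) (Icc (0:ℝ) 1) (Icc (0:ℝ) 1) := fun y hy =>
    ⟨abs_nonneg _, abs_le.2 ⟨by linarith [hx.2, hy.1], by linarith [hx.1, hy.2]⟩⟩
  simpa [Function.comp_def] using (hcont.comp_of_eq hdist hmaps (by simp)).tendsto

theorem exists_isOpen_inter_eq_of_mem_nhdsWithin {X : Type*} [TopologicalSpace X]
    {s t : Set X} (hst : s ⊆ t) (h : ∀ x ∈ s, s ∈ 𝓝[t] x) :
    ∃ V : Set X, IsOpen V ∧ s = V ∩ t := by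
  refine ⟨interior (s ∪ tᶜ), isOpen_interior, Subset.antisymm ?_ ?_⟩
  · intro x hx
    refine ⟨mem_interior_iff_mem_nhds.2 ?_, hst hx⟩
    filter_upwards [mem_nhdsWithin_iff_eventually.1 (h x hx)] with y hy
      using (em (y ∈ t)).imp hy id
  · rintro x ⟨hx, hxt⟩
    exact (interior_subset hx).resolve_right (not_not.2 hxt)

theorem stmt5_general (f : ℝ → ℝ)
    (hf0 : f 0 = 0)
    (hcont : ContinuousWithinAt f (Icc (0:ℝ) 1) 0)
    (C : ℝ) (hC : 1 ≤ C)
    (hR2a : ∀ x ∈ Icc (0:ℝ) 1, ∀ y ∈ Icc (0:ℝ) 1, x + y ∈ Icc (0:ℝ) 1 →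
      f (x + y) ≤ C * (f x + f y))
    (hR2b : ∀ x ∈ Icc (0:ℝ) 1, ∀ y ∈ Icc (0:ℝ) 1, x + y ∈ Icc (0:ℝ) 1 →
      f x ≤ C * (f (x + y) + f y)) :
    (∃ V : Set ℝ, IsOpen V ∧ {x ∈ Icc (0:ℝ) 1 | 0 < f x} = V ∩ Icc (0:ℝ) 1) ∧
    ∀ x ∈ Icc (0:ℝ) 1, f x = 0 → ContinuousWithinAt f (Icc (0:ℝ) 1) x := by
  have hf : R2Condition f C := ⟨hR2a, hR2b⟩
  have hCpos : 0 < C := zero_lt_one.trans_le hC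
  have hnear (x : ℝ) (hx : x ∈ Icc (0:ℝ) 1) :
      Tendsto (fun y => C * f |y - x|) (𝓝[Icc (0:ℝ) 1] x) (𝓝 0) := by
    simpa [hf0] using (tendsto_comp_abs_sub_nhdsWithin_Icc hcont hx).const_mul C
  refine ⟨exists_isOpen_inter_eq_of_mem_nhdsWithin (fun x hx => hx.1) ?_, ?_⟩
  · rintro x ⟨hx, hfx⟩
    filter_upwards [self_mem_nhdsWithin, (hnear x hx).eventually (gt_mem_nhds hfx)]
      with y hy hsmall
    have hbound : f x ≤ C * (f y + f |x - y|) := hf.le_mul_add_abs_sub hy hx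
    rw [abs_sub_comm] at hbound
    exact ⟨hy, pos_of_mul_pos_right (by linarith) hCpos.le⟩
  · intro x hx hfx
    rw [ContinuousWithinAt, hfx]
    refine squeeze_zero_norm' ?_ (by simpa using (hnear x hx).abs)
    filter_upwards [self_mem_nhdsWithin] with y hy
    simpa [abs_mul, abs_of_pos hCpos] using hf.abs_le_mul_abs_of_eq_zero hC hx hy hfx

/-- `{f > 0}` is open in `[0,1]` and `f` is continuous at the zero set. -/
theorem stmt5 (f : ℝ → ℝ) (B : ℝ)
    (hbd : ∀ x ∈ Icc (0:ℝ) 1, f x ≤ B)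
    (hnn : ∀ x ∈ Icc (0:ℝ) 1, 0 ≤ f x)
    (hf0 : f 0 = 0)
    (hcont : ContinuousWithinAt f (Icc (0:ℝ) 1) 0)
    (C : ℝ) (hC : 1 ≤ C)
    (hR2a : ∀ x ∈ Icc (0:ℝ) 1, ∀ y ∈ Icc (0:ℝ) 1, x + y ∈ Icc (0:ℝ) 1 →
      f (x + y) ≤ C * (f x + f y))
    (hR2b : ∀ x ∈ Icc (0:ℝ) 1, ∀ y ∈ Icc (0:ℝ) 1, x + y ∈ Icc (0:ℝ) 1 →
      f x ≤ C * (f (x + y) + f y)) :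
    (∃ V : Set ℝ, IsOpen V ∧ {x ∈ Icc (0:ℝ) 1 | 0 < f x} = V ∩ Icc (0:ℝ) 1) ∧
    ∀ x ∈ Icc (0:ℝ) 1, f x = 0 → ContinuousWithinAt f (Icc (0:ℝ) 1) x :=
  stmt5_general f hf0 hcont C hC hR2a hR2b
end

section
/- Let G ⊆ [0,1] be a set such that 0 is an accumulation point of V(G) = ⋃{U open : G ∩ U is comeager in U}, and G is a comeager G_δ subset of V(G). Then there exists a nonempty perfect set P ⊆ [0,1] such that |y − x| ∈ G for all distinct x, y ∈ P. -/
/-!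
Choose `x₀ > x₁ > ⋯` with `3 xₙ₊₁ ≤ xₙ`, write `G = ⋂ Wₙ` with `Wₙ` open and decreasing, and
require that every nonzero signed sum `|∑_{i<n} cᵢ xᵢ|` (`cᵢ ∈ {-1, 0, 1}`) lies in `G` and has its
`2 xₙ`-neighbourhood inside `Wₙ`. Because `3 xₙ₊₁ ≤ xₙ`, such a sum is at least `xₙ₋₁ / 2 > xₙ`,
so appending `cₙ xₙ` changes its absolute value by `0` or `± xₙ`; hence the next term only needs
`xₙ ∈ G` and `t ± xₙ ∈ G` for finitely many `t ∈ G`. Translates of the meagre set `VG \ G` are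
meagre, so by Baire such `xₙ` exist in any open subset of `VG`, and since `0` is an accumulation
point of the open set `VG`, arbitrarily small ones exist. For `P = {∑ σₙ xₙ : σ ∈ 2^ℕ}` every
distance is the absolute value of an infinite signed sum, which lies within `3/2 xₙ` of its `n`-th
partial sum, hence in every `Wₙ`.
-/

open Set Filter Topology Metric

def IsSgn (c : ℕ → ℝ) : Prop := ∀ i, c i = -1 ∨ c i = 0 ∨ c i = 1

namespace IsSgn

variable {c : ℕ → ℝ}

lemma abs_le (hc : IsSgn c) (i : ℕ) : |c i| ≤ 1 := by
  rcases hc i with h | h | h <;> simp [h]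

lemma abs_eq_one (hc : IsSgn c) {i : ℕ} (hi : c i ≠ 0) : |c i| = 1 := by
  rcases hc i with h | h | h <;> simp_all

lemma toNat_sub (σ τ : ℕ → Bool) : IsSgn fun n => ((τ n).toNat : ℝ) - (σ n).toNat := by
  intro n
  beta_reduce
  cases σ n <;> cases τ n <;> simp

end IsSgn

lemma abs_toNat_le (σ : ℕ → Bool) (i : ℕ) : |((σ i).toNat : ℝ)| ≤ 1 := by
  cases σ i <;> simp

lemma abs_add_eq_add_or_sub {t y : ℝ} (h : |y| ≤ |t|) :
    |t + y| = |t| + |y| ∨ |t + y| = |t| - |y| := by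
  rcases abs_cases t with ht | ht <;> rcases abs_cases y with hy | hy <;>
    rcases abs_cases (t + y) with hty | hty <;>
    first | (left; linarith) | (right; linarith)

def absSignedSums (x : ℕ → ℝ) (n : ℕ) : Set ℝ :=
  {s | ∃ c, IsSgn c ∧ (∃ i < n, c i ≠ 0) ∧ s = |∑ i ∈ Finset.range n, c i * x i|}

def extendSums (T : Set ℝ) (y : ℝ) : Set ℝ :=
  insert y (T ∪ (· + y) '' T ∪ (· - y) '' T)

lemma extendSums_mono {T T' : Set ℝ} (h : T ⊆ T') (y : ℝ) : extendSums T y ⊆ extendSums T' y :=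
  insert_subset_insert <| union_subset_union (union_subset_union h (image_mono h)) (image_mono h)

lemma absSignedSums_zero (x : ℕ → ℝ) : absSignedSums x 0 = ∅ := by
  simp [absSignedSums]

lemma absSignedSums_succ_subset {x : ℕ → ℝ} {n : ℕ} (hx : 0 ≤ x n)
    (hle : ∀ t ∈ absSignedSums x n, x n ≤ t) :
    absSignedSums x (n + 1) ⊆ extendSums (absSignedSums x n) (x n) := by
  rintro _ ⟨c, hc, ⟨m, hm, hcm⟩, rfl⟩
  rw [Finset.sum_range_succ]
  set s := ∑ i ∈ Finset.range n, c i * x i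
  by_cases hpre : ∃ i < n, c i ≠ 0
  · have hs : |s| ∈ absSignedSums x n := ⟨c, hc, hpre, rfl⟩
    by_cases hcn : c n = 0
    · simp [extendSums, hcn, hs]
    have hy : |c n * x n| = x n := by rw [abs_mul, hc.abs_eq_one hcn, one_mul, abs_of_nonneg hx]
    rcases abs_add_eq_add_or_sub (hy ▸ hle _ hs) with e | e <;>
      rw [e, hy] <;> simp [extendSums, hs]
  · push Not at hpre
    have hs0 : s = 0 := Finset.sum_eq_zero fun i hi => by
      rw [hpre i (Finset.mem_range.1 hi), zero_mul]
    have hcn : c n ≠ 0 := by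
      obtain rfl : m = n := by by_contra h; exact hcm (hpre m (by omega))
      exact hcm
    rw [hs0, zero_add, abs_mul, hc.abs_eq_one hcn, one_mul, abs_of_nonneg hx]
    exact mem_insert _ _

/-- After `n` terms of the sequence are chosen, `a` is the last of them (initially `1`) and `T`
contains `absSignedSums x n`. -/
structure IsStage (G : Set ℝ) (a : ℝ) (T : Set ℝ) : Prop where
  pos : 0 < a
  finite : T.Finite
  subset : T ⊆ G
  half_le : ∀ t ∈ T, a / 2 ≤ t

lemma IsStage.extend {G T : Set ℝ} {a y : ℝ} (h : IsStage G a T) (hy : 0 < y)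
    (hya : 3 * y ≤ a) (hyG : y ∈ G) (hTy : ∀ t ∈ T, t + y ∈ G ∧ t - y ∈ G) :
    IsStage G y (extendSums T y) where
  pos := hy
  finite := ((h.finite.union (h.finite.image _)).union (h.finite.image _)).insert y
  subset := by
    rintro _ (rfl | (ht | ⟨t, ht, rfl⟩) | ⟨t, ht, rfl⟩)
    exacts [hyG, h.subset ht, (hTy t ht).1, (hTy t ht).2]
  half_le := by
    rintro _ (rfl | (ht | ⟨t, ht, rfl⟩) | ⟨t, ht, rfl⟩)
    · linarith
    all_goals linarith [h.half_le _ ht]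

section Baire

variable {G V : Set ℝ}

/-- Residually many `y` satisfy `y ∈ G`, `t + y ∈ G`, `t - y ∈ G` whenever these points lie in `V`,
and all of them do lie in `V` on an open set of small positive `y`. -/
lemma exists_pos_shifts_mem (hV : IsOpen V) (hGV : G ⊆ V) (hcom : IsMeagre (V \ G))
    (hacc : ∀ ε > (0:ℝ), ∃ x ∈ V, 0 < x ∧ x < ε) {T : Set ℝ} (hT : T.Finite) (hTG : T ⊆ G)
    {ε : ℝ} (hε : 0 < ε) :
    ∃ y, 0 < y ∧ y < ε ∧ y ∈ G ∧ ∀ t ∈ T, t + y ∈ G ∧ t - y ∈ G := by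
  obtain ⟨ρ, hρ, hρV⟩ := hT.isCompact.exists_thickening_subset_open hV (hTG.trans hGV)
  obtain ⟨v, hvV, hv0, hvlt⟩ := hacc (min ρ ε) (lt_min hρ hε)
  have hres : ∀ᶠ z in residual ℝ, z ∈ V → z ∈ G :=
    mem_of_superset hcom fun z hz hzV => not_not.1 fun hzG => hz ⟨hzV, hzG⟩
  have hgood : ∀ᶠ y in residual ℝ, (y ∈ V → y ∈ G) ∧
      ∀ t ∈ T, (t + y ∈ V → t + y ∈ G) ∧ (t - y ∈ V → t - y ∈ G) :=
    hres.and <| hT.eventually_all.2 fun t _ =>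
      ((tendsto_residual_of_isOpenMap (continuous_const_add t) (isOpenMap_add_left t)).eventually
        hres).and
      ((tendsto_residual_of_isOpenMap (continuous_sub_left t) (isOpenMap_sub_left t)).eventually
        hres)
  obtain ⟨y, hy, hyV, hy0, hylt⟩ := (dense_of_mem_residual hgood).exists_mem_open
    (hV.inter isOpen_Ioo) ⟨v, hvV, hv0, hvlt⟩
  have hyρ : y < ρ := hylt.trans_le (min_le_left _ _)
  have hshift : ∀ t ∈ T, t + y ∈ V ∧ t - y ∈ V := fun t ht =>
    ⟨hρV <| mem_thickening_iff.2 ⟨t, ht, by simpa [Real.dist_eq, abs_of_pos hy0]⟩,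
      hρV <| mem_thickening_iff.2 ⟨t, ht, by simpa [Real.dist_eq, abs_of_pos hy0]⟩⟩
  exact ⟨y, hy0, hylt.trans_le (min_le_right _ _), hy.1 hyV, fun t ht =>
    ⟨(hy.2 t ht).1 (hshift t ht).1, (hy.2 t ht).2 (hshift t ht).2⟩⟩

lemma IsStage.exists_next (hV : IsOpen V) (hGV : G ⊆ V) (hcom : IsMeagre (V \ G))
    (hacc : ∀ ε > (0:ℝ), ∃ x ∈ V, 0 < x ∧ x < ε) {a : ℝ} {T U : Set ℝ} (h : IsStage G a T)
    (hU : IsOpen U) (hGU : G ⊆ U) :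
    ∃ y, 0 < y ∧ 3 * y ≤ a ∧ thickening (2 * y) T ⊆ U ∧ IsStage G y (extendSums T y) := by
  obtain ⟨δ, hδ, hδU⟩ := h.finite.isCompact.exists_thickening_subset_open hU (h.subset.trans hGU)
  obtain ⟨y, hy0, hylt, hyG, hTy⟩ := exists_pos_shifts_mem hV hGV hcom hacc h.finite h.subset
    (lt_min (div_pos h.pos three_pos) (half_pos hδ))
  have hya : y < a / 3 := hylt.trans_le (min_le_left _ _)
  have hyδ : y < δ / 2 := hylt.trans_le (min_le_right _ _)
  exact ⟨y, hy0, by linarith, (thickening_mono (by linarith) T).trans hδU,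
    h.extend hy0 (by linarith) hyG hTy⟩

end Baire

structure IsRapid (x : ℕ → ℝ) : Prop where
  pos : ∀ n, 0 < x n
  three_mul_succ_le : ∀ n, 3 * x (n + 1) ≤ x n

noncomputable def cantorSum (x : ℕ → ℝ) (σ : ℕ → Bool) : ℝ :=
  ∑' n, ((σ n).toNat : ℝ) * x n

namespace IsRapid

variable {x : ℕ → ℝ}

lemma le_geometric (hx : IsRapid x) (n i : ℕ) : x (i + n) ≤ x n * (1 / 3) ^ i := by
  induction i with
  | zero => simp
  | succ i ih =>
    have := hx.three_mul_succ_le (i + n)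
    rw [Nat.add_right_comm, pow_succ]
    linarith

lemma summable_tail (hx : IsRapid x) (n : ℕ) : Summable fun i => x (i + n) :=
  .of_nonneg_of_le (fun i => (hx.pos _).le) (hx.le_geometric n)
    ((summable_geometric_of_lt_one (by norm_num) (by norm_num)).mul_left _)

lemma summable (hx : IsRapid x) : Summable x := by
  simpa using hx.summable_tail 0

lemma tsum_tail_le (hx : IsRapid x) (n : ℕ) : ∑' i, x (i + n) ≤ 3 / 2 * x n := by
  have h := (hx.summable_tail n).tsum_le_tsum (hx.le_geometric n)
    ((summable_geometric_of_lt_one (by norm_num) (by norm_num)).mul_left _)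
  rw [tsum_mul_left, tsum_geometric_of_lt_one (by norm_num) (by norm_num)] at h
  linarith

lemma summable_mul {c : ℕ → ℝ} (hx : IsRapid x) (hc : ∀ i, |c i| ≤ 1) :
    Summable fun i => c i * x i :=
  hx.summable.of_norm_bounded fun i => by
    rw [Real.norm_eq_abs, abs_mul, abs_of_pos (hx.pos i)]
    exact mul_le_of_le_one_left (hx.pos i).le (hc i)

lemma abs_tsum_mul_tail_le {c : ℕ → ℝ} (hx : IsRapid x) (hc : ∀ i, |c i| ≤ 1) (n : ℕ) :
    |∑' i, c (i + n) * x (i + n)| ≤ 3 / 2 * x n := by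
  have hsum : Summable fun i => c (i + n) * x (i + n) :=
    (summable_nat_add_iff n).2 (hx.summable_mul hc)
  calc |∑' i, c (i + n) * x (i + n)| ≤ ∑' i, |c (i + n) * x (i + n)| := by
        simpa only [Real.norm_eq_abs] using norm_tsum_le_tsum_norm hsum.norm
    _ ≤ ∑' i, x (i + n) := hsum.abs.tsum_le_tsum (fun i => by
        rw [abs_mul, abs_of_pos (hx.pos _)]
        exact mul_le_of_le_one_left (hx.pos _).le (hc _)) (hx.summable_tail n)
    _ ≤ 3 / 2 * x n := hx.tsum_tail_le n

lemma continuous_cantorSum (hx : IsRapid x) : Continuous (cantorSum x) :=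
  continuous_tsum (fun n => (continuous_of_discreteTopology (f := fun b : Bool =>
    (b.toNat : ℝ) * x n)).comp (continuous_apply n)) hx.summable fun n σ => by
      rw [Real.norm_eq_abs, abs_mul, abs_of_pos (hx.pos n)]
      exact mul_le_of_le_one_left (hx.pos n).le (abs_toNat_le σ n)

lemma cantorSum_sub (hx : IsRapid x) (σ τ : ℕ → Bool) :
    cantorSum x τ - cantorSum x σ = ∑' n, (((τ n).toNat : ℝ) - (σ n).toNat) * x n := by
  simp only [cantorSum, sub_mul]
  exact ((hx.summable_mul (abs_toNat_le τ)).tsum_sub (hx.summable_mul (abs_toNat_le σ))).symm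

lemma cantorSum_mem_Icc (hx : IsRapid x) (σ : ℕ → Bool) :
    cantorSum x σ ∈ Icc 0 (3 / 2 * x 0) := by
  have hle : ∀ n, ((σ n).toNat : ℝ) * x n ≤ x n := fun n =>
    mul_le_of_le_one_left (hx.pos n).le (le_of_abs_le (abs_toNat_le σ n))
  refine ⟨tsum_nonneg fun n => mul_nonneg (Nat.cast_nonneg _) (hx.pos n).le, ?_⟩
  calc cantorSum x σ ≤ ∑' n, x n := (hx.summable_mul (abs_toNat_le σ)).tsum_le_tsum hle hx.summable
    _ ≤ 3 / 2 * x 0 := by simpa using hx.tsum_tail_le 0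

lemma abs_cantorSum_update_sub (hx : IsRapid x) (σ : ℕ → Bool) (n : ℕ) :
    |cantorSum x (Function.update σ n (!σ n)) - cantorSum x σ| = x n := by
  rw [hx.cantorSum_sub, tsum_eq_single n fun k hk => by simp [Function.update_of_ne hk]]
  cases σ n <;> simp [abs_of_pos (hx.pos n)]

lemma perfect_range_cantorSum (hx : IsRapid x) : Perfect (range (cantorSum x)) := by
  refine ⟨(isCompact_range hx.continuous_cantorSum).isClosed, preperfect_iff_nhds.2 ?_⟩
  rintro _ ⟨σ, rfl⟩ U hU
  obtain ⟨ε, hε, hεU⟩ := Metric.mem_nhds_iff.1 hU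
  obtain ⟨n, hn⟩ := (hx.summable.tendsto_atTop_zero.eventually_lt_const hε).exists
  have hflip := hx.abs_cantorSum_update_sub σ n
  refine ⟨_, ⟨hεU ?_, Function.update σ n (!σ n), rfl⟩, fun h => ?_⟩
  · rwa [mem_ball, Real.dist_eq, hflip]
  · rw [h, sub_self, abs_zero] at hflip
    exact (hx.pos n).ne hflip

/-- The partial sums up to `n` approximate the full sum within `3/2 * x n`. -/
lemma abs_tsum_mem_iInter (hx : IsRapid x) {W : ℕ → Set ℝ} (hW : Antitone W)
    (hthick : ∀ n, thickening (2 * x n) (absSignedSums x n) ⊆ W n) {c : ℕ → ℝ} (hc : IsSgn c)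
    (hc0 : ∃ m, c m ≠ 0) : |∑' n, c n * x n| ∈ ⋂ n, W n := by
  obtain ⟨m, hm⟩ := hc0
  refine mem_iInter.2 fun k => hW (show k ≤ max k m + 1 by omega) (hthick _ ?_)
  set n := max k m + 1
  refine mem_thickening_iff.2 ⟨_, ⟨c, hc, ⟨m, by omega, hm⟩, rfl⟩, ?_⟩
  rw [Real.dist_eq]
  refine (abs_abs_sub_abs_le_abs_sub _ _).trans_lt ?_
  calc |∑' i, c i * x i - ∑ i ∈ Finset.range n, c i * x i|
      = |∑' i, c (i + n) * x (i + n)| := by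
        rw [← (hx.summable_mul hc.abs_le).sum_add_tsum_nat_add n, add_sub_cancel_left]
    _ ≤ 3 / 2 * x n := hx.abs_tsum_mul_tail_le hc.abs_le n
    _ < 2 * x n := by linarith [hx.pos n]

end IsRapid

lemma IsGδ.exists_antitone_isOpen {X : Type*} [TopologicalSpace X] {s : Set X} (hs : IsGδ s) :
    ∃ W : ℕ → Set X, (∀ n, IsOpen (W n)) ∧ Antitone W ∧ s = ⋂ n, W n := by
  obtain ⟨W, hWo, rfl⟩ := isGδ_iff_eq_iInter_nat.1 hs
  exact ⟨dissipate W, fun n => (finite_le_nat n).isOpen_biInter fun k _ => hWo k,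
    antitone_dissipate, iInter_dissipate.symm⟩

lemma exists_isRapid_thickening_subset {G V : Set ℝ} (hV : IsOpen V) (hGV : G ⊆ V)
    (hcom : IsMeagre (V \ G)) (hacc : ∀ ε > (0:ℝ), ∃ x ∈ V, 0 < x ∧ x < ε) {W : ℕ → Set ℝ}
    (hWo : ∀ n, IsOpen (W n)) (hGW : ∀ n, G ⊆ W n) :
    ∃ x : ℕ → ℝ, IsRapid x ∧ 3 * x 0 ≤ 1 ∧
      ∀ n, thickening (2 * x n) (absSignedSums x n) ⊆ W n := by
  choose! next hnext using fun n a T (h : IsStage G a T) =>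
    h.exists_next hV hGV hcom hacc (hWo n) (hGW n)
  let S : ℕ → ℝ × Set ℝ := fun n => Nat.rec (1, ∅)
    (fun n p => (next n p.1 p.2, extendSums p.2 (next n p.1 p.2))) n
  have hS : ∀ n, IsStage G (S n).1 (S n).2 := by
    intro n
    induction n with
    | zero => exact ⟨one_pos, finite_empty, empty_subset _, fun _ => False.elim⟩
    | succ n ih => exact (hnext n _ _ ih).2.2.2
  let x n := (S (n + 1)).1
  have hsums : ∀ n, absSignedSums x n ⊆ (S n).2 := by
    intro n
    induction n with
    | zero => exact (absSignedSums_zero x).trans_subset (empty_subset _)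
    | succ n ih =>
      obtain ⟨hx0, hx3, -⟩ := hnext n _ _ (hS n)
      refine (absSignedSums_succ_subset hx0.le fun t ht => ?_).trans (extendSums_mono ih _)
      linarith [(hS n).half_le t (ih ht)]
  refine ⟨x, ⟨fun n => (hnext n _ _ (hS n)).1, fun n => (hnext (n + 1) _ _ (hS (n + 1))).2.1⟩,
    (hnext 0 _ _ (hS 0)).2.1,
    fun n => (thickening_subset_of_subset _ (hsums n)).trans (hnext n _ _ (hS n)).2.2.1⟩

theorem stmt8_general (G : Set ℝ)
    (VG : Set ℝ) (hVG : VG = ⋃₀ {U : Set ℝ | IsOpen U ∧ IsMeagre (U \ G)})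
    (hacc : ∀ ε > (0:ℝ), ∃ x ∈ VG, 0 < x ∧ x < ε)
    (hGδ : IsGδ G) (hsub : G ⊆ VG) (hcom : IsMeagre (VG \ G)) :
    ∃ P : Set ℝ, P ⊆ Icc (0:ℝ) 1 ∧ P.Nonempty ∧ Perfect P ∧
      ∀ x ∈ P, ∀ y ∈ P, x ≠ y → |y - x| ∈ G := by
  have hV : IsOpen VG := hVG ▸ isOpen_sUnion fun U hU => hU.1
  obtain ⟨W, hWo, hWanti, rfl⟩ := hGδ.exists_antitone_isOpen
  obtain ⟨x, hx, hx0, hthick⟩ :=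
    exists_isRapid_thickening_subset hV hsub hcom hacc hWo (iInter_subset W)
  refine ⟨range (cantorSum x), ?_, range_nonempty _, hx.perfect_range_cantorSum, ?_⟩
  · rintro _ ⟨σ, rfl⟩
    obtain ⟨h0, h1⟩ := hx.cantorSum_mem_Icc σ
    exact ⟨h0, by linarith⟩
  · rintro _ ⟨σ, rfl⟩ _ ⟨τ, rfl⟩ hne
    rw [hx.cantorSum_sub]
    refine hx.abs_tsum_mem_iInter hWanti hthick (IsSgn.toNat_sub σ τ) ?_
    by_contra! h
    refine hne (congrArg _ (funext fun n => ?_))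
    have hn := h n
    revert hn
    cases σ n <;> cases τ n <;> simp

/-- Existence of a perfect set whose distance set lies in `G` (Lemma dis). -/
theorem stmt8 (G : Set ℝ) (hG : G ⊆ Icc (0:ℝ) 1)
    (VG : Set ℝ) (hVG : VG = ⋃₀ {U : Set ℝ | IsOpen U ∧ IsMeagre (U \ G)})
    (hacc : ∀ ε > (0:ℝ), ∃ x ∈ VG, 0 < x ∧ x < ε)
    (hGδ : IsGδ G) (hsub : G ⊆ VG) (hcom : IsMeagre (VG \ G)) :
    ∃ P : Set ℝ, P ⊆ Icc (0:ℝ) 1 ∧ P.Nonempty ∧ Perfect P ∧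
      ∀ x ∈ P, ∀ y ∈ P, x ≠ y → |y - x| ∈ G :=
  stmt8_general G VG hVG hacc hGδ hsub hcom
end

section
/- Let f : [0,1] → ℝ≥0 be a Borel function satisfying (R2) with constant C, and suppose f is not continuous at 0. Then there exists a > 0 such that 0 is an accumulation point of V(G) for G = {x ∈ [0,1] : f(x) > a}, where V(G) is the union of all open sets U in which G is comeager. -/
/-!
Put `a = b / (2C)` and `G = {f > a}`. Being Borel, `G` agrees with an open set up to a meagre
set, so if `V(G)` missed an interval `(0, δ)`, then `G` would be meagre in `(0, δ)`. But take
`x₀ < δ` with `f x₀ > b`: by (R2), `b < f x₀ ≤ C (f (x₀ + y) + f y)`, so wherever `f y ≤ a` we get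
`f (x₀ + y) > a`. Hence `(x₀, x₀ + δ) \ G` lies in the translate by `x₀` of the meagre set
`G ∩ (0, δ)`, and the interval `(x₀, x₀ + δ)` lies in `V(G)`, a contradiction.
-/

open Set Topology

-- The paper's `V(s)`.
def comeagreInterior {X : Type*} [TopologicalSpace X] (s : Set X) : Set X :=
  ⋃₀ {U : Set X | IsOpen U ∧ IsMeagre (U \ s)}

section Baire

variable {X : Type*} [TopologicalSpace X]

lemma subset_comeagreInterior {U s : Set X} (hU : IsOpen U) (hUs : IsMeagre (U \ s)) :
    U ⊆ comeagreInterior s :=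
  fun _ hx => ⟨U, ⟨hU, hUs⟩, hx⟩

lemma Filter.EventuallyEq.isMeagre_diff {s t : Set X} (h : s =ᵇ t) : IsMeagre (s \ t) :=
  h.le.mono fun _ hst hx => hx.2 (hst hx.1)

lemma BaireMeasurableSet.isMeagre_inter_of_disjoint_comeagreInterior {s W : Set X}
    (hs : BaireMeasurableSet s) (hW : IsOpen W) (hdisj : Disjoint W (comeagreInterior s)) :
    IsMeagre (W ∩ s) := by
  obtain ⟨u, hu, hsu⟩ := hs.residualEq_isOpen
  have hWu : W ∩ u ⊆ comeagreInterior s :=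
    subset_comeagreInterior (hW.inter hu) <|
      hsu.symm.isMeagre_diff.mono (sdiff_subset_sdiff_left inter_subset_right)
  have hWs : W ∩ s ⊆ s \ u := fun x hx =>
    ⟨hx.2, fun hxu => disjoint_left.mp hdisj hx.1 (hWu ⟨hx.1, hxu⟩)⟩
  exact hsu.isMeagre_diff.mono hWs

end Baire

lemma IsMeagre.preimage_sub_right {G : Type*} [TopologicalSpace G] [AddGroup G]
    [IsTopologicalAddGroup G] {s : Set G} (hs : IsMeagre s) (c : G) :
    IsMeagre ((· - c) ⁻¹' s) :=
  hs.preimage_of_isOpenMap (continuous_sub_right c) (Homeomorph.subRight c).isOpenMap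

lemma Ioo_diff_superlevel_subset_preimage_sub {f : ℝ → ℝ} {C b x₀ δ : ℝ} (hC : 0 < C)
    (hR2b : ∀ x ∈ Icc (0:ℝ) 1, ∀ y ∈ Icc (0:ℝ) 1, x + y ∈ Icc (0:ℝ) 1 →
      f x ≤ C * (f (x + y) + f y))
    (hx₀ : 0 ≤ x₀) (hx₀δ : x₀ + δ ≤ 1) (hfx₀ : b < f x₀) :
    Ioo x₀ (x₀ + δ) \ {x ∈ Icc (0:ℝ) 1 | b / (2 * C) < f x} ⊆
      (· - x₀) ⁻¹' (Ioo 0 δ ∩ {x ∈ Icc (0:ℝ) 1 | b / (2 * C) < f x}) := by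
  rintro z ⟨⟨hxz, hzδ⟩, hz⟩
  have hzI : z ∈ Icc (0:ℝ) 1 := ⟨by linarith, by linarith⟩
  have hyI : z - x₀ ∈ Icc (0:ℝ) 1 := ⟨by linarith, by linarith⟩
  refine ⟨⟨by linarith, by linarith⟩, hyI, ?_⟩
  by_contra! hy
  have hR := hR2b x₀ ⟨hx₀, by linarith⟩ (z - x₀) hyI (by rwa [add_sub_cancel])
  rw [add_sub_cancel] at hR
  have hCy : C * f (z - x₀) ≤ b / 2 :=
    calc C * f (z - x₀) ≤ C * (b / (2 * C)) := mul_le_mul_of_nonneg_left hy hC.le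
      _ = b / 2 := by field_simp
  refine hz ⟨hzI, ?_⟩
  rw [div_lt_iff₀ (by positivity)]
  linarith

theorem stmt9_general (f : ℝ → ℝ) (hmeas : Measurable f)
    (C : ℝ) (hC : 1 ≤ C)
    (hR2b : ∀ x ∈ Icc (0:ℝ) 1, ∀ y ∈ Icc (0:ℝ) 1, x + y ∈ Icc (0:ℝ) 1 →
      f x ≤ C * (f (x + y) + f y))
    (hdisc : ∃ b : ℝ, 0 < b ∧ ∀ ε > (0:ℝ), ∃ x ∈ Icc (0:ℝ) 1, 0 < x ∧ x < ε ∧ b < f x) :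
    ∃ a : ℝ, 0 < a ∧ ∀ ε > (0:ℝ),
      ∃ x ∈ ⋃₀ {U : Set ℝ | IsOpen U ∧ IsMeagre (U \ {x ∈ Icc (0:ℝ) 1 | a < f x})},
        0 < x ∧ x < ε := by
  obtain ⟨b, hb, hbx⟩ := hdisc
  have hC0 : 0 < C := by linarith
  set G := {x ∈ Icc (0:ℝ) 1 | b / (2 * C) < f x}
  have hG : BaireMeasurableSet G :=
    (measurableSet_Icc.inter (measurableSet_lt measurable_const hmeas)).baireMeasurableSet
  refine ⟨b / (2 * C), by positivity, fun ε hε => ?_⟩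
  obtain ⟨δ, hδ, hδε, hδ1⟩ : ∃ δ : ℝ, 0 < δ ∧ δ ≤ ε / 2 ∧ δ ≤ 1 / 2 :=
    ⟨min ε 1 / 2, by positivity, by gcongr; exact min_le_left ε 1,
      by gcongr; exact min_le_right ε 1⟩
  change ∃ x ∈ comeagreInterior G, 0 < x ∧ x < ε
  by_contra! hnone
  have hdisj : Disjoint (Ioo 0 δ) (comeagreInterior G) :=
    disjoint_left.mpr fun x hx hxG => (hnone x hxG hx.1).not_gt (by linarith [hx.2])
  have hmeagre := hG.isMeagre_inter_of_disjoint_comeagreInterior isOpen_Ioo hdisj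
  obtain ⟨x₀, -, hx₀, hx₀δ, hfx₀⟩ := hbx δ hδ
  have hsub : Ioo x₀ (x₀ + δ) ⊆ comeagreInterior G :=
    subset_comeagreInterior isOpen_Ioo <| (hmeagre.preimage_sub_right x₀).mono <|
      Ioo_diff_superlevel_subset_preimage_sub hC0 hR2b hx₀.le (by linarith) hfx₀
  have := hnone (x₀ + δ / 2) (hsub ⟨by linarith, by linarith⟩) (by linarith)
  linarith

/-- If `f` is Borel, satisfies (R2) and is discontinuous at 0, then `0` is adherent to
`V({f > a})` for some `a > 0` (Lemma dis1). -/
theorem stmt9 (f : ℝ → ℝ) (hmeas : Measurable f)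
    (hnn : ∀ x ∈ Icc (0:ℝ) 1, 0 ≤ f x) (hf0 : f 0 = 0)
    (C : ℝ) (hC : 1 ≤ C)
    (hR2a : ∀ x ∈ Icc (0:ℝ) 1, ∀ y ∈ Icc (0:ℝ) 1, x + y ∈ Icc (0:ℝ) 1 →
      f (x + y) ≤ C * (f x + f y))
    (hR2b : ∀ x ∈ Icc (0:ℝ) 1, ∀ y ∈ Icc (0:ℝ) 1, x + y ∈ Icc (0:ℝ) 1 →
      f x ≤ C * (f (x + y) + f y))
    (hdisc : ∃ b : ℝ, 0 < b ∧ ∀ ε > (0:ℝ), ∃ x ∈ Icc (0:ℝ) 1, 0 < x ∧ x < ε ∧ b < f x) :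
    ∃ a : ℝ, 0 < a ∧ ∀ ε > (0:ℝ),
      ∃ x ∈ ⋃₀ {U : Set ℝ | IsOpen U ∧ IsMeagre (U \ {x ∈ Icc (0:ℝ) 1 | a < f x})},
        0 < x ∧ x < ε :=
  stmt9_general f hmeas C hC hR2b hdisc
end

section
/- For each n ∈ ℕ define t_n : (0,1] → ℝ recursively by t_0(x) = 1 − log x and t_{n+1}(x) = 1 + log(t_n(x)). Then for every n and all x, y ∈ (0,1]: 1 ≤ t_n(xy) ≤ t_n(x)·t_n(y). -/
open Set

noncomputable def tIter : ℕ → ℝ → ℝ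
  | 0, x => 1 - Real.log x
  | n + 1, x => 1 + Real.log (tIter n x)

/-!
On `(0, 1]` every `t_n` is at least `1`. The logarithm turns a multiplicative bound
`t_n(xy) ≤ t_n(x) t_n(y)` into the additive one `t_{n+1}(xy) ≤ t_{n+1}(x) + t_{n+1}(y) - 1`
(for `t_0 = 1 - log` this holds with equality), and `a + b - 1 ≤ a b` for `a, b ≥ 1`
closes the induction.
-/

open Real

lemma add_sub_one_le_mul_of_one_le {a b : ℝ} (ha : 1 ≤ a) (hb : 1 ≤ b) : a + b - 1 ≤ a * b := by
  nlinarith [mul_nonneg (sub_nonneg.2 ha) (sub_nonneg.2 hb)]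

lemma mul_mem_Ioc_zero_one {x y : ℝ} (hx : x ∈ Ioc (0 : ℝ) 1) (hy : y ∈ Ioc (0 : ℝ) 1) :
    x * y ∈ Ioc (0 : ℝ) 1 :=
  ⟨mul_pos hx.1 hy.1, mul_le_one₀ hx.2 hy.1.le hy.2⟩

lemma one_le_tIter : ∀ (n : ℕ) {x : ℝ}, x ∈ Ioc (0 : ℝ) 1 → 1 ≤ tIter n x
  | 0, _, hx => (le_sub_self_iff 1).2 (log_nonpos hx.1.le hx.2)
  | n + 1, _, hx => le_add_of_nonneg_right (log_nonneg (one_le_tIter n hx))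

lemma tIter_mul_le_add_sub_one : ∀ (n : ℕ) {x y : ℝ}, x ∈ Ioc (0 : ℝ) 1 → y ∈ Ioc (0 : ℝ) 1 →
    tIter n (x * y) ≤ tIter n x + tIter n y - 1
  | 0, x, y, hx, hy => by
    simp only [tIter, log_mul hx.1.ne' hy.1.ne']
    linarith
  | n + 1, x, y, hx, hy => by
    have hxn := one_le_tIter n hx
    have hyn := one_le_tIter n hy
    have hlog : log (tIter n (x * y)) ≤ log (tIter n x) + log (tIter n y) := by
      rw [← log_mul (by positivity) (by positivity)]
      refine log_le_log (by linarith [one_le_tIter n (mul_mem_Ioc_zero_one hx hy)]) ?_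
      calc tIter n (x * y) ≤ tIter n x + tIter n y - 1 := tIter_mul_le_add_sub_one n hx hy
        _ ≤ tIter n x * tIter n y := add_sub_one_le_mul_of_one_le hxn hyn
    simp only [tIter]
    linarith

/-- Submultiplicativity of the iterated logarithms `t_n`. -/
theorem stmt10 :
    ∀ n : ℕ, ∀ x ∈ Ioc (0:ℝ) 1, ∀ y ∈ Ioc (0:ℝ) 1,
      1 ≤ tIter n (x * y) ∧ tIter n (x * y) ≤ tIter n x * tIter n y := by
  intro n x hx y hy
  refine ⟨one_le_tIter n (mul_mem_Ioc_zero_one hx hy), ?_⟩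
  calc tIter n (x * y) ≤ tIter n x + tIter n y - 1 := tIter_mul_le_add_sub_one n hx hy
    _ ≤ tIter n x * tIter n y := add_sub_one_le_mul_of_one_le (one_le_tIter n hx) (one_le_tIter n hy)
end

section
/- Let α ≥ 1 and let ℓ : (0,1] → [1,∞) be decreasing with ℓ(xy) ≤ ℓ(x)ℓ(y) for all x,y ∈ (0,1]. Define f(0) = 0 and f(x) = x^α/ℓ(x) for x ∈ (0,1]. Then f is strictly increasing and satisfies (R2): there is C ≥ 1 such that f(x+y) ≤ C(f(x)+f(y)) and f(x) ≤ C(f(x+y)+f(y)) for all x, y ∈ [0,1] with x+y ≤ 1. In particular E_f is an equivalence relation. -/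
/-!
Since `ℓ` is decreasing and submultiplicative, `c ≤ 2b` gives
`ℓ b ≤ ℓ (c/2) ≤ ℓ (1/2) ℓ c`, hence the doubling bound `f c ≤ 2^α ℓ(1/2) f b`.
Doubling alone yields the quasi-triangle inequality `f c ≤ K (f a + f b)` for `c ≤ a + b`
(apply it to `b = max a b`), which contains both halves of (R2) and, through
`|z - x| ≤ |z - y| + |y - x|`, the transitivity of `E_f`.
-/

open Set

section QuasiTriangle

variable {g : ℝ → ℝ} {K : ℝ}

theorem quasi_triangle_of_doubling (hK : 0 ≤ K) (hg : ∀ x ∈ Icc (0:ℝ) 1, 0 ≤ g x)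
    (hdoubling : ∀ b ∈ Icc (0:ℝ) 1, ∀ c ∈ Icc (0:ℝ) 1, c ≤ 2 * b → g c ≤ K * g b) :
    ∀ a ∈ Icc (0:ℝ) 1, ∀ b ∈ Icc (0:ℝ) 1, ∀ c ∈ Icc (0:ℝ) 1,
      c ≤ a + b → g c ≤ K * (g a + g b) := by
  intro a ha b hb c hc hcab
  rcases le_total a b with hab | hba
  · nlinarith [hdoubling b hb c hc (by linarith), hg a ha]
  · nlinarith [hdoubling a ha c hc (by linarith), hg b hb]

theorem abs_sub_mem_Icc_zero_one {u v : ℝ} (hu : u ∈ Icc (0:ℝ) 1) (hv : v ∈ Icc (0:ℝ) 1) :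
    |u - v| ∈ Icc (0:ℝ) 1 :=
  ⟨abs_nonneg _, abs_sub_le_of_nonneg_of_le hu.1 hu.2 hv.1 hv.2⟩

theorem equivalence_summable_abs_sub_of_quasi_triangle (h0 : g 0 = 0)
    (hg : ∀ x ∈ Icc (0:ℝ) 1, 0 ≤ g x)
    (htri : ∀ a ∈ Icc (0:ℝ) 1, ∀ b ∈ Icc (0:ℝ) 1, ∀ c ∈ Icc (0:ℝ) 1,
      c ≤ a + b → g c ≤ K * (g a + g b)) :
    Equivalence (fun x y : {u : ℕ → ℝ // ∀ n, u n ∈ Icc (0:ℝ) 1} =>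
      Summable fun n => g |y.1 n - x.1 n|) where
  refl x := by simp [h0]
  symm {x y} h := by simpa only [abs_sub_comm] using h
  trans {x y z} hxy hyz := by
    have hmem : ∀ (u v : {u : ℕ → ℝ // ∀ n, u n ∈ Icc (0:ℝ) 1}) n, |v.1 n - u.1 n| ∈ Icc (0:ℝ) 1 :=
      fun u v n => abs_sub_mem_Icc_zero_one (v.2 n) (u.2 n)
    refine Summable.of_nonneg_of_le (fun n => hg _ (hmem x z n))
      (fun n => htri _ (hmem y z n) _ (hmem x y n) _ (hmem x z n) (abs_sub_le _ _ _))
      ((hyz.add hxy).mul_left K)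

end QuasiTriangle

section RpowDiv

variable {α : ℝ} {ℓ f : ℝ → ℝ}

theorem apply_le_apply_half_mul_of_le_two_mul
    (hdec : ∀ x ∈ Ioc (0:ℝ) 1, ∀ y ∈ Ioc (0:ℝ) 1, x ≤ y → ℓ y ≤ ℓ x)
    (hsub : ∀ x ∈ Ioc (0:ℝ) 1, ∀ y ∈ Ioc (0:ℝ) 1, ℓ (x * y) ≤ ℓ x * ℓ y)
    {b c : ℝ} (hb : b ∈ Ioc (0:ℝ) 1) (hc : c ∈ Ioc (0:ℝ) 1) (hcb : c ≤ 2 * b) :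
    ℓ b ≤ ℓ (1/2) * ℓ c :=
  calc ℓ b ≤ ℓ (1/2 * c) := hdec _ ⟨by linarith [hc.1], by linarith [hc.2]⟩ b hb (by linarith)
    _ ≤ ℓ (1/2) * ℓ c := hsub _ ⟨by norm_num, by norm_num⟩ c hc

theorem nonneg_of_eq_rpow_div (hge : ∀ x ∈ Ioc (0:ℝ) 1, 1 ≤ ℓ x) (hf0 : f 0 = 0)
    (hf : ∀ x ∈ Ioc (0:ℝ) 1, f x = x ^ α / ℓ x) : ∀ x ∈ Icc (0:ℝ) 1, 0 ≤ f x := by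
  intro x ⟨hx0, hx1⟩
  rcases hx0.eq_or_lt with rfl | hx0
  · exact hf0.ge
  · rw [hf x ⟨hx0, hx1⟩]
    exact div_nonneg (Real.rpow_nonneg hx0.le α) (zero_le_one.trans (hge x ⟨hx0, hx1⟩))

theorem strictMonoOn_of_eq_rpow_div (hα : 0 < α) (hge : ∀ x ∈ Ioc (0:ℝ) 1, 1 ≤ ℓ x)
    (hdec : ∀ x ∈ Ioc (0:ℝ) 1, ∀ y ∈ Ioc (0:ℝ) 1, x ≤ y → ℓ y ≤ ℓ x)
    (hf0 : f 0 = 0) (hf : ∀ x ∈ Ioc (0:ℝ) 1, f x = x ^ α / ℓ x) :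
    StrictMonoOn f (Icc (0:ℝ) 1) := by
  intro x ⟨hx0, hx1⟩ y ⟨_, hy1⟩ hxy
  have hy : y ∈ Ioc (0:ℝ) 1 := ⟨hx0.trans_lt hxy, hy1⟩
  have hℓy : 0 < ℓ y := zero_lt_one.trans_le (hge y hy)
  rw [hf y hy]
  rcases hx0.eq_or_lt with rfl | hx0
  · rw [hf0]
    exact div_pos (Real.rpow_pos_of_pos hy.1 α) hℓy
  · have hx : x ∈ Ioc (0:ℝ) 1 := ⟨hx0, hx1⟩
    rw [hf x hx]
    calc x ^ α / ℓ x ≤ x ^ α / ℓ y := by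
          gcongr
          exact hdec x hx y hy hxy.le
      _ < y ^ α / ℓ y := by gcongr

theorem le_mul_of_le_two_mul_of_eq_rpow_div (hα : 0 ≤ α) (hge : ∀ x ∈ Ioc (0:ℝ) 1, 1 ≤ ℓ x)
    (hdec : ∀ x ∈ Ioc (0:ℝ) 1, ∀ y ∈ Ioc (0:ℝ) 1, x ≤ y → ℓ y ≤ ℓ x)
    (hsub : ∀ x ∈ Ioc (0:ℝ) 1, ∀ y ∈ Ioc (0:ℝ) 1, ℓ (x * y) ≤ ℓ x * ℓ y)
    (hf0 : f 0 = 0) (hf : ∀ x ∈ Ioc (0:ℝ) 1, f x = x ^ α / ℓ x) :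
    ∀ b ∈ Icc (0:ℝ) 1, ∀ c ∈ Icc (0:ℝ) 1, c ≤ 2 * b → f c ≤ 2 ^ α * ℓ (1/2) * f b := by
  intro b hb c ⟨hc0, hc1⟩ hcb
  have hfb := nonneg_of_eq_rpow_div hge hf0 hf b hb
  have hℓhalf : 0 ≤ ℓ (1/2) := zero_le_one.trans (hge _ ⟨by norm_num, by norm_num⟩)
  rcases hc0.eq_or_lt with rfl | hc0
  · rw [hf0]
    exact mul_nonneg (mul_nonneg (by positivity) hℓhalf) hfb
  have hb' : b ∈ Ioc (0:ℝ) 1 := ⟨by linarith, hb.2⟩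
  have hc : c ∈ Ioc (0:ℝ) 1 := ⟨hc0, hc1⟩
  have hℓb : 0 < ℓ b := zero_lt_one.trans_le (hge b hb')
  have hℓc : 0 < ℓ c := zero_lt_one.trans_le (hge c hc)
  have hpow : c ^ α ≤ 2 ^ α * b ^ α := by
    rw [← Real.mul_rpow zero_le_two hb.1]
    exact Real.rpow_le_rpow hc0.le hcb hα
  have hℓ := apply_le_apply_half_mul_of_le_two_mul hdec hsub hb' hc hcb
  have hfb' : b ^ α = f b * ℓ b := by rw [hf b hb', div_mul_cancel₀ _ hℓb.ne']
  rw [hf c hc, div_le_iff₀ hℓc]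
  calc c ^ α ≤ 2 ^ α * (f b * ℓ b) := hfb' ▸ hpow
    _ ≤ 2 ^ α * (f b * (ℓ (1/2) * ℓ c)) := by gcongr
    _ = 2 ^ α * ℓ (1/2) * f b * ℓ c := by ring

end RpowDiv

/-- `f = Id^α/ℓ` is strictly increasing, satisfies (R2), and `E_f` is an equivalence
relation. -/
theorem stmt12 (α : ℝ) (hα : 1 ≤ α) (ℓ : ℝ → ℝ)
    (hge : ∀ x ∈ Ioc (0:ℝ) 1, 1 ≤ ℓ x)
    (hdec : ∀ x ∈ Ioc (0:ℝ) 1, ∀ y ∈ Ioc (0:ℝ) 1, x ≤ y → ℓ y ≤ ℓ x)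
    (hsub : ∀ x ∈ Ioc (0:ℝ) 1, ∀ y ∈ Ioc (0:ℝ) 1, ℓ (x * y) ≤ ℓ x * ℓ y)
    (f : ℝ → ℝ) (hf0 : f 0 = 0) (hf : ∀ x ∈ Ioc (0:ℝ) 1, f x = x ^ α / ℓ x) :
    StrictMonoOn f (Icc (0:ℝ) 1) ∧
    (∃ C : ℝ, 1 ≤ C ∧
      (∀ x ∈ Icc (0:ℝ) 1, ∀ y ∈ Icc (0:ℝ) 1, x + y ≤ 1 →
        f (x + y) ≤ C * (f x + f y)) ∧
      (∀ x ∈ Icc (0:ℝ) 1, ∀ y ∈ Icc (0:ℝ) 1, x + y ≤ 1 →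
        f x ≤ C * (f (x + y) + f y))) ∧
    Equivalence (fun x y : {u : ℕ → ℝ // ∀ n, u n ∈ Icc (0:ℝ) 1} =>
      Summable fun n => f |y.1 n - x.1 n|) := by
  have hα0 : 0 < α := by linarith
  have hK : 1 ≤ 2 ^ α * ℓ (1/2) :=
    one_le_mul_of_one_le_of_one_le (Real.one_le_rpow one_le_two hα0.le)
      (hge _ ⟨by norm_num, by norm_num⟩)
  have hnonneg := nonneg_of_eq_rpow_div hge hf0 hf
  have htri := quasi_triangle_of_doubling (by linarith) hnonneg
    (le_mul_of_le_two_mul_of_eq_rpow_div hα0.le hge hdec hsub hf0 hf)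
  refine ⟨strictMonoOn_of_eq_rpow_div hα0 hge hdec hf0 hf, ⟨_, hK, ?_, ?_⟩,
    equivalence_summable_abs_sub_of_quasi_triangle hf0 hnonneg htri⟩
  · intro x hx y hy hxy
    exact htri x hx y hy _ ⟨add_nonneg hx.1 hy.1, hxy⟩ le_rfl
  · intro x hx y hy hxy
    exact htri _ ⟨add_nonneg hx.1 hy.1, hxy⟩ y hy x hx (by linarith [hy.1])
end

section
/- Let ψ : (0,1] → (0,∞) be essentially decreasing with x^α ψ(x) ≤ B for all x ∈ (0,1] (some B ≥ 1, α ≥ 1), and suppose liminf_{x→0+} x^δ ψ(x) = 0 for every δ > 0. Then for every integer n ≥ 2 there exists μ ∈ (0,1] with ψ(μ/n) ≤ 2ψ(μ). -/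
/-!
If instead `ψ(μ/n) > 2ψ(μ)` for every `μ`, then `ψ(n⁻ᵏ) ≥ 2ᵏψ(1)`. Bracketing any `x ∈ (0,1]` as
`n⁻⁽ᵏ⁺¹⁾ < x ≤ n⁻ᵏ` and using that `ψ` is essentially decreasing gives `x^δ ψ(x) ≥ ψ(1)/(2C)` for
`δ = log 2 / log n`, so `x^δ ψ(x)` stays away from `0` near `0`.
-/

open Set Real

section EssentiallyDecreasing

variable {ψ : ℝ → ℝ} {a C N : ℝ}

lemma pow_mul_apply_one_le_apply_inv_pow (hN : 1 ≤ N) (ha : 0 ≤ a)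
    (hgrow : ∀ μ ∈ Ioc (0:ℝ) 1, a * ψ μ ≤ ψ (μ / N)) (k : ℕ) :
    a ^ k * ψ 1 ≤ ψ ((N ^ k)⁻¹) := by
  induction k with
  | zero => simp
  | succ k ih =>
    have hmem : (N ^ k)⁻¹ ∈ Ioc (0:ℝ) 1 :=
      ⟨by positivity, inv_le_one_of_one_le₀ (one_le_pow₀ hN)⟩
    calc a ^ (k + 1) * ψ 1 = a * (a ^ k * ψ 1) := by ring
      _ ≤ a * ψ ((N ^ k)⁻¹) := mul_le_mul_of_nonneg_left ih ha
      _ ≤ ψ ((N ^ k)⁻¹ / N) := hgrow _ hmem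
      _ = ψ ((N ^ (k + 1))⁻¹) := by rw [pow_succ, mul_inv, div_eq_mul_inv]

lemma div_le_mul_rpow_logb_mul (hψ₁ : 0 ≤ ψ 1)
    (hdec : ∀ x ∈ Ioc (0:ℝ) 1, ∀ y ∈ Ioc (0:ℝ) 1, x ≤ y → ψ y ≤ C * ψ x)
    (hN : 1 < N) (ha : 1 ≤ a) (hgrow : ∀ μ ∈ Ioc (0:ℝ) 1, a * ψ μ ≤ ψ (μ / N))
    {x : ℝ} (hx : x ∈ Ioc (0:ℝ) 1) :
    ψ 1 / a ≤ C * (x ^ logb N a * ψ x) := by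
  obtain ⟨k, hk, hk'⟩ := exists_nat_pow_near (one_le_inv_iff₀.2 hx) hN
  have hN₀ : 0 < N := by linarith
  have hx_le : x ≤ (N ^ k)⁻¹ := (le_inv_comm₀ (by positivity) hx.1).1 hk
  have hlt_x : (N ^ (k + 1))⁻¹ < x := (inv_lt_comm₀ hx.1 (by positivity)).1 hk'
  have hψx : a ^ k * ψ 1 ≤ C * ψ x :=
    (pow_mul_apply_one_le_apply_inv_pow hN.le (by linarith) hgrow k).trans
      (hdec x hx _ ⟨by positivity, inv_le_one_of_one_le₀ (one_le_pow₀ hN.le)⟩ hx_le)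
  have hxδ : (a ^ (k + 1))⁻¹ ≤ x ^ logb N a :=
    calc (a ^ (k + 1))⁻¹ = ((N ^ (k + 1))⁻¹) ^ logb N a := by
          rw [inv_rpow (by positivity), ← rpow_pow_comm hN₀.le,
            rpow_logb hN₀ hN.ne' (by linarith)]
      _ ≤ x ^ logb N a := rpow_le_rpow (by positivity) hlt_x.le (logb_nonneg hN ha)
  calc ψ 1 / a = (a ^ (k + 1))⁻¹ * (a ^ k * ψ 1) := by
        field_simp
        ring
    _ ≤ x ^ logb N a * (C * ψ x) :=
        mul_le_mul hxδ hψx (by positivity) (rpow_nonneg hx.1.le _)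
    _ = C * (x ^ logb N a * ψ x) := by ring

end EssentiallyDecreasing

theorem stmt17_general (C : ℝ) (hC : 1 ≤ C)
    (ψ : ℝ → ℝ) (hpos : ∀ x ∈ Ioc (0:ℝ) 1, 0 < ψ x)
    (hdec : ∀ x ∈ Ioc (0:ℝ) 1, ∀ y ∈ Ioc (0:ℝ) 1, x ≤ y → ψ y ≤ C * ψ x)
    (hliminf : ∀ δ > (0:ℝ), ∀ c > (0:ℝ), ∀ ε > (0:ℝ),
      ∃ x ∈ Ioc (0:ℝ) 1, x < ε ∧ x ^ δ * ψ x < c) :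
    ∀ n : ℕ, 2 ≤ n → ∃ μ ∈ Ioc (0:ℝ) 1, ψ (μ / n) ≤ 2 * ψ μ := by
  intro n hn
  by_contra! hgrow
  have hN : (1:ℝ) < n := by exact_mod_cast hn
  have hψ₁ : 0 < ψ 1 := hpos 1 (right_mem_Ioc.2 one_pos)
  have hC₀ : 0 < C := by linarith
  obtain ⟨x, hx, -, hsmall⟩ :=
    hliminf _ (logb_pos hN one_lt_two) (ψ 1 / (2 * C)) (by positivity) 1 one_pos
  have hlarge := div_le_mul_rpow_logb_mul hψ₁.le hdec hN one_le_two
    (fun μ hμ ↦ (hgrow μ hμ).le) hx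
  have : C * (x ^ logb n 2 * ψ x) < ψ 1 / 2 :=
    calc C * (x ^ logb n 2 * ψ x) < C * (ψ 1 / (2 * C)) := mul_lt_mul_of_pos_left hsmall hC₀
      _ = ψ 1 / 2 := by field_simp
  linarith

/-- If `x^α ψ` is bounded, `ψ` essentially decreasing and `liminf x^δ ψ(x) = 0` for all
`δ > 0`, then for every `n ≥ 2` there is `μ` with `ψ(μ/n) ≤ 2ψ(μ)`. -/
theorem stmt17 (α B C : ℝ) (hα : 1 ≤ α) (hB : 1 ≤ B) (hC : 1 ≤ C)
    (ψ : ℝ → ℝ) (hpos : ∀ x ∈ Ioc (0:ℝ) 1, 0 < ψ x)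
    (hdec : ∀ x ∈ Ioc (0:ℝ) 1, ∀ y ∈ Ioc (0:ℝ) 1, x ≤ y → ψ y ≤ C * ψ x)
    (hbd : ∀ x ∈ Ioc (0:ℝ) 1, x ^ α * ψ x ≤ B)
    (hliminf : ∀ δ > (0:ℝ), ∀ c > (0:ℝ), ∀ ε > (0:ℝ),
      ∃ x ∈ Ioc (0:ℝ) 1, x < ε ∧ x ^ δ * ψ x < c) :
    ∀ n : ℕ, 2 ≤ n → ∃ μ ∈ Ioc (0:ℝ) 1, ψ (μ / n) ≤ 2 * ψ μ :=
  stmt17_general C hC ψ hpos hdec hliminf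
end

section
/- Let γ = 17/16 and for U ⊆ ℕ define μ_U(0) = 1 and μ_U^α(n) = γ^{|U ∩ {0,…,⌊1+log n⌋−1}|} for n ≥ 1. Set σ_U(n) = Σ_{i=1}^n μ_U^α(i). Then the sequence ((1+σ_U(n))/n²)_{n≥1} is essentially decreasing: there is a constant D (independent of U) such that for all 1 ≤ n < m, (1+σ_U(m))/m² ≤ D·(1+σ_U(n))/n². -/
/-!
Write `γ = 17/16` and `K(n) = ⌊1 + log n⌋₊`, so that `μ(n) = γ ^ |U ∩ [0, K(n))|`. The count
`|U ∩ [0, K)|` grows by at most one when `K` does, and `K(m) - K(n) < 1 + log (m/n)`; since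
`γ ≤ e` this gives `n μ(m) ≤ γ m μ(n)` for `1 ≤ n ≤ m`. Summing over `i ≤ n` yields
`n μ(n) ≤ 2γ σ(n)`, while monotonicity of `μ` gives `σ(m) ≤ m μ(m)`. Chaining the three,
`n² σ(m) ≤ 2γ² m² σ(n)`, and `D = 3` works.
-/

open Set

noncomputable def muA (U : Set ℕ) (n : ℕ) : ℝ :=
  if n = 0 then 1 else (17 / 16 : ℝ) ^ (U ∩ Set.Iio ⌊1 + Real.log n⌋₊).ncard

noncomputable def sigmaA (U : Set ℕ) (n : ℕ) : ℝ := ∑ i ∈ Finset.Icc 1 n, muA U i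

open Real

lemma ncard_inter_Iio_mono (U : Set ℕ) {a b : ℕ} (h : a ≤ b) :
    (U ∩ Iio a).ncard ≤ (U ∩ Iio b).ncard :=
  ncard_le_ncard (inter_subset_inter_right U (Iio_subset_Iio h)) ((finite_Iio b).inter_of_right U)

lemma ncard_inter_Iio_le_add_sub (U : Set ℕ) (a b : ℕ) :
    (U ∩ Iio b).ncard ≤ (U ∩ Iio a).ncard + (b - a) := by
  have hsub : U ∩ Iio b ⊆ (U ∩ Iio a) ∪ Ico a b := fun x ⟨hxU, hxb⟩ => by
    by_cases hxa : x < a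
    · exact Or.inl ⟨hxU, hxa⟩
    · exact Or.inr ⟨not_lt.mp hxa, hxb⟩
  calc (U ∩ Iio b).ncard ≤ ((U ∩ Iio a) ∪ Ico a b).ncard :=
        ncard_le_ncard hsub (((finite_Iio a).inter_of_right U).union (finite_Ico a b))
    _ ≤ (U ∩ Iio a).ncard + (b - a) := by
        simpa only [ncard_Ico_nat] using ncard_union_le (U ∩ Iio a) (Ico a b)

lemma Nat.cast_floor_sub_floor_lt {a b : ℝ} (ha : 0 ≤ a) (hab : a ≤ b) :
    ((⌊b⌋₊ - ⌊a⌋₊ : ℕ) : ℝ) < b - a + 1 := by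
  rw [Nat.cast_sub (Nat.floor_le_floor hab)]
  linarith [Nat.floor_le (ha.trans hab), Nat.lt_floor_add_one a]

lemma pow_le_mul_exp {γ t : ℝ} {k : ℕ} (hγ : 1 ≤ γ) (hγe : γ ≤ exp 1) (ht : 0 ≤ t)
    (hk : (k : ℝ) ≤ 1 + t) : γ ^ k ≤ γ * exp t :=
  calc γ ^ k = γ ^ (k : ℝ) := (rpow_natCast γ k).symm
    _ ≤ γ ^ (1 + t) := rpow_le_rpow_of_exponent_le hγ hk
    _ = γ * γ ^ t := by rw [rpow_add (by linarith), rpow_one]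
    _ ≤ γ * exp 1 ^ t := by gcongr
    _ = γ * exp t := by rw [exp_one_rpow]

lemma muA_of_ne_zero (U : Set ℕ) {n : ℕ} (hn : n ≠ 0) :
    muA U n = (17 / 16 : ℝ) ^ (U ∩ Iio ⌊1 + log n⌋₊).ncard := if_neg hn

lemma one_le_muA (U : Set ℕ) (n : ℕ) : 1 ≤ muA U n := by
  unfold muA
  split_ifs
  exacts [le_rfl, one_le_pow₀ (by norm_num)]

lemma floor_one_add_log_mono {n m : ℕ} (hn : 1 ≤ n) (h : n ≤ m) :
    ⌊1 + log n⌋₊ ≤ ⌊1 + log m⌋₊ := by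
  gcongr

lemma muA_mono (U : Set ℕ) {n m : ℕ} (hn : 1 ≤ n) (h : n ≤ m) : muA U n ≤ muA U m := by
  rw [muA_of_ne_zero U (by omega), muA_of_ne_zero U (by omega)]
  exact pow_le_pow_right₀ (by norm_num) (ncard_inter_Iio_mono U (floor_one_add_log_mono hn h))

lemma mul_muA_le (U : Set ℕ) {n m : ℕ} (hn : 1 ≤ n) (h : n ≤ m) :
    n * muA U m ≤ 17 / 16 * m * muA U n := by
  have hn' : (0 : ℝ) < n := by exact_mod_cast hn
  have hm' : (0 : ℝ) < m := by exact_mod_cast hn.trans h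
  have hlog : log n ≤ log m := log_le_log hn' (by exact_mod_cast h)
  have hgap := Nat.cast_floor_sub_floor_lt (add_nonneg zero_le_one (log_natCast_nonneg n))
    (by linarith : 1 + log n ≤ 1 + log m)
  set k := ⌊1 + log n⌋₊
  set l := ⌊1 + log m⌋₊
  have hpow : (17 / 16 : ℝ) ^ (l - k) ≤ 17 / 16 * (m / n) := by
    rw [← exp_log hm', ← exp_log hn', ← exp_sub]
    exact pow_le_mul_exp (by norm_num) (by linarith [add_one_le_exp 1]) (by linarith)
      (by linarith)
  have hexp : (U ∩ Iio l).ncard ≤ (U ∩ Iio k).ncard + (l - k) :=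
    ncard_inter_Iio_le_add_sub U k l
  calc (n : ℝ) * muA U m ≤ n * ((17 / 16) ^ (U ∩ Iio k).ncard * (17 / 16) ^ (l - k)) := by
        rw [muA_of_ne_zero U (by omega), ← pow_add]
        gcongr
        norm_num
    _ ≤ n * (muA U n * (17 / 16 * (m / n))) := by
        rw [muA_of_ne_zero U (by omega)]
        gcongr
    _ = 17 / 16 * m * muA U n := by field_simp

lemma sq_le_two_mul_sum_Icc (n : ℕ) : (n : ℝ) ^ 2 ≤ 2 * ∑ i ∈ Finset.Icc 1 n, (i : ℝ) := by
  induction n with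
  | zero => simp
  | succ n ih =>
    rw [Finset.sum_Icc_succ_top (by omega)]
    push_cast
    nlinarith

lemma mul_muA_le_sigmaA (U : Set ℕ) (n : ℕ) : n * muA U n ≤ 2 * (17 / 16) * sigmaA U n := by
  rcases Nat.eq_zero_or_pos n with rfl | hn
  · simp [sigmaA]
  have hsum : (∑ i ∈ Finset.Icc 1 n, (i : ℝ)) * muA U n ≤ 17 / 16 * n * sigmaA U n := by
    rw [Finset.sum_mul, sigmaA, Finset.mul_sum]
    refine Finset.sum_le_sum fun i hi => ?_
    rw [Finset.mem_Icc] at hi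
    exact mul_muA_le U hi.1 hi.2
  have hn' : (0 : ℝ) < n := by exact_mod_cast hn
  have hgauss := sq_le_two_mul_sum_Icc n
  have hμ := one_le_muA U n
  nlinarith

lemma sigmaA_le_mul_muA (U : Set ℕ) (m : ℕ) : sigmaA U m ≤ m * muA U m := by
  calc sigmaA U m ≤ (Finset.Icc 1 m).card • muA U m :=
        Finset.sum_le_card_nsmul _ _ _ fun i hi =>
          muA_mono U (Finset.mem_Icc.mp hi).1 (Finset.mem_Icc.mp hi).2
    _ = m * muA U m := by simp

lemma sq_mul_sigmaA_le (U : Set ℕ) {n m : ℕ} (hn : 1 ≤ n) (h : n ≤ m) :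
    (n : ℝ) ^ 2 * sigmaA U m ≤ 2 * (17 / 16) ^ 2 * m ^ 2 * sigmaA U n := by
  calc (n : ℝ) ^ 2 * sigmaA U m ≤ n ^ 2 * (m * muA U m) := by
        gcongr
        exact sigmaA_le_mul_muA U m
    _ = n * m * (n * muA U m) := by ring
    _ ≤ n * m * (17 / 16 * m * muA U n) :=
        mul_le_mul_of_nonneg_left (mul_muA_le U hn h) (by positivity)
    _ = 17 / 16 * m ^ 2 * (n * muA U n) := by ring
    _ ≤ 17 / 16 * m ^ 2 * (2 * (17 / 16) * sigmaA U n) :=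
        mul_le_mul_of_nonneg_left (mul_muA_le_sigmaA U n) (by positivity)
    _ = 2 * (17 / 16) ^ 2 * m ^ 2 * sigmaA U n := by ring

/-- `((1+σ_U(n))/n²)` is essentially decreasing, uniformly in `U`. -/
theorem stmt18 : ∃ D : ℝ, 1 ≤ D ∧ ∀ U : Set ℕ, ∀ n m : ℕ, 1 ≤ n → n < m →
    (1 + sigmaA U m) / (m : ℝ) ^ 2 ≤ D * ((1 + sigmaA U n) / (n : ℝ) ^ 2) := by
  refine ⟨3, by norm_num, fun U n m hn hnm => ?_⟩
  have hn' : (0 : ℝ) < n := by exact_mod_cast hn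
  have hnm' : (n : ℝ) ≤ m := by exact_mod_cast hnm.le
  have hm' : (0 : ℝ) < m := hn'.trans_le hnm'
  have hσ := sq_mul_sigmaA_le U hn hnm.le
  have hσn : 0 ≤ sigmaA U n := Finset.sum_nonneg fun i _ => zero_le_one.trans (one_le_muA U i)
  rw [div_le_iff₀ (by positivity), mul_div_assoc', div_mul_eq_mul_div, le_div_iff₀ (by positivity)]
  nlinarith [pow_le_pow_left₀ hn'.le hnm' 2]
end
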